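/- arXiv:1808.06121 — 10 statements merged into one kernel-verified Lean document; each statement's English description precedes it below -/
import Mathlib

section
/- If a Borel subset B of a Polish group G is invariant under conjugation, then B is left Haar null if and only if it is right Haar null if and only if it is Haar null. (Here B is left Haar null if there is a Borel probability measure μ on G with μ(gB)=0 for all g ∈ G, right Haar null if μ(Bg)=0 for all g, and Haar null if μ(gBh)=0 for all g,h.) -/
/-!
Conjugation invariance of `B` means `gB = Bg` for every `g`, hence `gBh = g(hB) = (gh)B`:
every two-sided translate of `B` is a left translate and every left translate is a right one,
so the three null conditions quantify over the same family of sets.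
-/

open MeasureTheory

variable {G : Type*} [Group G] [TopologicalSpace G] [IsTopologicalGroup G]
  [PolishSpace G] [MeasurableSpace G] [BorelSpace G]

/-- A Borel set `B` is Haar null if there is a Borel probability measure `μ` with
`μ(gBh) = 0` for all `g, h`. -/
def IsHaarNullBorel (B : Set G) : Prop :=
  ∃ μ : Measure G, IsProbabilityMeasure μ ∧ ∀ g h : G, μ ((fun x => g * x * h) '' B) = 0

/-- A Borel set `B` is left Haar null if there is a Borel probability measure `μ` with
`μ(gB) = 0` for all `g`. -/
def IsLeftHaarNullBorel (B : Set G) : Prop :=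
  ∃ μ : Measure G, IsProbabilityMeasure μ ∧ ∀ g : G, μ ((fun x => g * x) '' B) = 0

/-- A Borel set `B` is right Haar null if there is a Borel probability measure `μ` with
`μ(Bg) = 0` for all `g`. -/
def IsRightHaarNullBorel (B : Set G) : Prop :=
  ∃ μ : Measure G, IsProbabilityMeasure μ ∧ ∀ g : G, μ ((fun x => x * g) '' B) = 0

section Translates

variable {H : Type*} [Group H] {B : Set H}

theorem image_mul_left_eq_image_mul_right_of_conj
    (hconj : ∀ g : H, (fun x => g * x * g⁻¹) '' B = B) (g : H) :
    (fun x => g * x) '' B = (fun x => x * g) '' B := by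
  conv_rhs => rw [← hconj g, Set.image_image]
  simp only [inv_mul_cancel_right]

theorem image_mul_mul_eq_image_mul_left_of_conj
    (hconj : ∀ g : H, (fun x => g * x * g⁻¹) '' B = B) (g h : H) :
    (fun x => g * x * h) '' B = (fun x => g * h * x) '' B :=
  calc (fun x => g * x * h) '' B = (fun y => g * y) '' ((fun x => x * h) '' B) := by
        simp only [Set.image_image, mul_assoc]
    _ = (fun y => g * y) '' ((fun x => h * x) '' B) := by
        rw [image_mul_left_eq_image_mul_right_of_conj hconj]
    _ = (fun x => g * h * x) '' B := by
        simp only [Set.image_image, mul_assoc]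

section HaarNull

variable [MeasurableSpace H]

theorem IsHaarNullBorel.isRightHaarNullBorel (hB : IsHaarNullBorel B) :
    IsRightHaarNullBorel B := by
  obtain ⟨μ, hμ, hnull⟩ := hB
  exact ⟨μ, hμ, fun g => by simpa using hnull 1 g⟩

theorem isLeftHaarNullBorel_iff_isRightHaarNullBorel_of_conj
    (hconj : ∀ g : H, (fun x => g * x * g⁻¹) '' B = B) :
    IsLeftHaarNullBorel B ↔ IsRightHaarNullBorel B := by
  simp only [IsLeftHaarNullBorel, IsRightHaarNullBorel,
    image_mul_left_eq_image_mul_right_of_conj hconj]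

theorem IsLeftHaarNullBorel.isHaarNullBorel_of_conj
    (hconj : ∀ g : H, (fun x => g * x * g⁻¹) '' B = B) (hB : IsLeftHaarNullBorel B) :
    IsHaarNullBorel B := by
  obtain ⟨μ, hμ, hnull⟩ := hB
  exact ⟨μ, hμ, fun g h => by
    rw [image_mul_mul_eq_image_mul_left_of_conj hconj]
    exact hnull (g * h)⟩

end HaarNull

end Translates

theorem left_iff_right_iff_haarNull_of_conjInvariant_general (B : Set G)
    (hconj : ∀ g : G, (fun x => g * x * g⁻¹) '' B = B) :
    (IsLeftHaarNullBorel B ↔ IsRightHaarNullBorel B) ∧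
    (IsRightHaarNullBorel B ↔ IsHaarNullBorel B) := by
  have hLR := isLeftHaarNullBorel_iff_isRightHaarNullBorel_of_conj hconj
  exact ⟨hLR, fun hR => (hLR.mpr hR).isHaarNullBorel_of_conj hconj,
    IsHaarNullBorel.isRightHaarNullBorel⟩

/-- If a Borel subset of a Polish group is invariant under conjugation, then it is
left Haar null iff it is right Haar null iff it is Haar null. -/
theorem left_iff_right_iff_haarNull_of_conjInvariant (B : Set G)
    (hB : MeasurableSet B) (hconj : ∀ g : G, (fun x => g * x * g⁻¹) '' B = B) :
    (IsLeftHaarNullBorel B ↔ IsRightHaarNullBorel B) ∧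
    (IsRightHaarNullBorel B ↔ IsHaarNullBorel B) :=
  left_iff_right_iff_haarNull_of_conjInvariant_general B hconj
end

section
/- In a Polish group G, if a subset A is a compact biter (for every compact K ⊆ G there exist an open set U and elements g,h ∈ G with U ∩ K nonempty and g(U ∩ K)h ⊆ A), then A is not Haar null. -/
open MeasureTheory

variable {G : Type*} [Group G] [TopologicalSpace G] [IsTopologicalGroup G]
  [PolishSpace G] [MeasurableSpace G] [BorelSpace G]

/-- A set `A` is Haar null if it is contained in a Borel set `B` for which there is a
Borel probability measure `μ` with `μ(gBh) = 0` for all `g, h`. -/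
def IsHaarNull (A : Set G) : Prop :=
  ∃ B : Set G, MeasurableSet B ∧ A ⊆ B ∧
    ∃ μ : Measure G, IsProbabilityMeasure μ ∧ ∀ g h : G, μ ((fun x => g * x * h) '' B) = 0

/-- `A` is a compact biter: for every (nonempty) compact `K` there are an open `U` and
`g, h` with `U ∩ K ≠ ∅` and `g(U ∩ K)h ⊆ A`. -/
def IsCompactBiter (A : Set G) : Prop :=
  ∀ K : Set G, IsCompact K → K.Nonempty →
    ∃ U : Set G, IsOpen U ∧ (U ∩ K).Nonempty ∧
      ∃ g h : G, (fun x => g * x * h) '' (U ∩ K) ⊆ A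

/-!
By tightness, a Borel probability measure `μ` on a Polish space charges some compact set `K`;
shrinking `K` to the support of `μ.restrict K` gives a nonempty compact set all of whose
portions have positive measure. If `A` is a compact biter, one of these portions is carried
into `A`, hence into the Borel hull `B`, by `x ↦ g x h`; so the portion lies in the
translate `g⁻¹ B h⁻¹`, which a witness of Haar nullness must give measure zero.
-/

namespace MeasureTheory.Measure

variable {X : Type*} [TopologicalSpace X] [MeasurableSpace X]

theorem measure_inter_support_pos [HereditarilyLindelofSpace X] {ν : Measure X} {U : Set X}
    (hU : IsOpen U) (hUν : (U ∩ ν.support).Nonempty) : 0 < ν (U ∩ ν.support) := by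
  obtain ⟨x, hxU, hxν⟩ := hUν
  rw [measure_inter_conull measure_compl_support]
  exact (mem_support_iff_forall x).1 hxν U (hU.mem_nhds hxU)

theorem _root_.IsCompact.support_restrict [T2Space X] [OpensMeasurableSpace X]
    {μ : Measure X} {K : Set X} (hK : IsCompact K) : IsCompact (μ.restrict K).support := by
  refine hK.of_isClosed_subset isClosed_support (support_restrict_subset.trans ?_)
  rw [hK.isClosed.closure_eq]
  exact Set.inter_subset_left

theorem exists_isCompact_nonempty_forall_measure_inter_pos [PolishSpace X] [BorelSpace X]
    (μ : Measure X) [IsFiniteMeasure μ] (hμ : μ ≠ 0) :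
    ∃ K : Set X, IsCompact K ∧ K.Nonempty ∧
      ∀ U : Set X, IsOpen U → (U ∩ K).Nonempty → 0 < μ (U ∩ K) := by
  obtain ⟨K, hK, hμK⟩ := InnerRegular.exists_isCompact_not_null.2 hμ
  refine ⟨(μ.restrict K).support, hK.support_restrict, nonempty_support (by simpa), ?_⟩
  intro U hU hUK
  exact (measure_inter_support_pos hU hUK).trans_le (restrict_le_self _)

end MeasureTheory.Measure

/-- In a Polish group, a compact biter is not Haar null. -/
theorem not_haarNull_of_isCompactBiter (A : Set G) (hA : IsCompactBiter A) :
    ¬ IsHaarNull A := by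
  rintro ⟨B, -, hAB, μ, hμ, hnull⟩
  obtain ⟨K, hK, hKne, hportion⟩ :=
    Measure.exists_isCompact_nonempty_forall_measure_inter_pos μ (IsProbabilityMeasure.ne_zero μ)
  obtain ⟨U, hU, hUK, g, h, hbite⟩ := hA K hK hKne
  have hsub : U ∩ K ⊆ (fun x => g⁻¹ * x * h⁻¹) '' B := fun x hx =>
    ⟨g * x * h, hAB (hbite ⟨x, hx, rfl⟩), by group⟩
  exact (hportion U hU hUK).ne' (measure_mono_null hsub (hnull g⁻¹ h⁻¹))
end

section
/- (Splitting Lemma, finite version) Let R be the random graph with vertex set V. If F ⊆ Aut(R) is a finite set of automorphisms and A, B ⊆ V are disjoint finite sets, then there exists a vertex v such that for every pair of distinct f, g ∈ F we have f(v) ≠ g(v), v is adjacent to every vertex of A, and v is not adjacent to any vertex of B. -/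
/-- The defining extension property of the random (Rado) graph: for every pair of disjoint
finite sets `A, B` of vertices there is a vertex adjacent to everything in `A` and to
nothing in `B`. -/
def ExtensionProperty {V : Type*} (G : SimpleGraph V) : Prop :=
  ∀ A B : Finset V, Disjoint A B →
    ∃ v : V, (∀ a ∈ A, G.Adj a v) ∧ (∀ b ∈ B, ¬ G.Adj b v)

open Finset in
/-- Extension property with avoidance of a finite set. -/
lemma extension_avoid {V : Type*} [Infinite V] [DecidableEq V] (G : SimpleGraph V)
    (hG : ExtensionProperty G) (A B C : Finset V) (hAB : Disjoint A B) :
    ∃ v : V, v ∉ C ∧ (∀ a ∈ A, G.Adj a v) ∧ (∀ b ∈ B, ¬ G.Adj b v) := by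
  obtain ⟨T, hTsub, hTcard⟩ :=
    ((A ∪ B : Finset V).finite_toSet.infinite_compl).exists_subset_card_eq (C.card + 1)
  have hT : ∀ t ∈ T, t ∉ A ∧ t ∉ B := by
    intro t ht
    have := hTsub ht
    simp only [Set.mem_compl_iff, coe_union, Set.mem_union, mem_coe, not_or] at this
    exact this
  have hdisj : ∀ t ∈ T, Disjoint (insert t A) (B ∪ T.erase t) := by
    intro t ht
    rw [Finset.disjoint_left]
    intro x hx hx'
    rcases Finset.mem_insert.1 hx with rfl | hxA
    · rcases Finset.mem_union.1 hx' with h | h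
      · exact (hT x ht).2 h
      · exact (Finset.notMem_erase x T) h
    · rcases Finset.mem_union.1 hx' with h | h
      · exact (Finset.disjoint_left.1 hAB hxA) h
      · exact (hT x (Finset.mem_of_mem_erase h)).1 hxA
  choose w hw1 hw2 using fun (t : T) => hG _ _ (hdisj t t.2)
  -- the w t are pairwise distinct
  have hinj : Function.Injective w := by
    intro t t' htt'
    by_contra hne
    have h1 : G.Adj (t : V) (w t) := hw1 t t (Finset.mem_insert_self _ _)
    have h2 : ¬ G.Adj (t : V) (w t') := by
      apply hw2 t'
      exact Finset.mem_union_right _ (Finset.mem_erase.2 ⟨Subtype.coe_injective.ne hne, t.2⟩)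
    rw [htt'] at h1
    exact h2 h1
  -- some w t avoids C
  have : ∃ t : T, w t ∉ C := by
    by_contra h
    push_neg at h
    have : (Finset.univ : Finset T).card ≤ C.card := by
      apply Finset.card_le_card_of_injOn w (fun t _ => h t)
      exact fun a _ b _ hab => hinj hab
    simp only [Finset.card_univ, Fintype.card_coe, hTcard] at this
    omega
  obtain ⟨t, htC⟩ := this
  refine ⟨w t, htC, fun a ha => hw1 t a (Finset.mem_insert_of_mem ha),
    fun b hb => hw2 t b (Finset.mem_union_left _ hb)⟩

/-- Distinct automorphisms of a graph with the extension property disagree on an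
infinite set. -/
lemma disagree_infinite {V : Type*} [Infinite V] (G : SimpleGraph V)
    (hG : ExtensionProperty G) (f g : G ≃g G) (hfg : f ≠ g) :
    {y : V | f y ≠ g y}.Infinite := by
  classical
  by_contra hfin
  rw [Set.not_infinite] at hfin
  have hne : {y : V | f y ≠ g y}.Nonempty := by
    by_contra h
    rw [Set.not_nonempty_iff_eq_empty, Set.eq_empty_iff_forall_notMem] at h
    apply hfg
    ext y
    have := h y
    simpa using this
  obtain ⟨d, hd⟩ := hne
  set h : G ≃g G := g.trans f.symm with hh
  have hkey : ∀ y : V, h y = y ↔ f y = g y := by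
    intro y
    constructor
    · intro hy
      have : f (h y) = f y := congrArg f hy
      simpa [hh] using this.symm
    · intro hy
      simp [hh, ← hy]
  have hdd : h d ≠ d := fun hc => hd ((hkey d).1 hc)
  have hdisj : Disjoint ({d} : Finset V) ({h d} : Finset V) := by
    simp [Finset.disjoint_left, Ne.symm hdd]
  obtain ⟨v, hvC, hv1, hv2⟩ := extension_avoid G hG {d} {h d} hfin.toFinset hdisj
  have hvfix : h v = v := by
    rw [hkey]
    by_contra hc
    exact hvC (hfin.mem_toFinset.2 hc)
  have hadj : G.Adj d v := hv1 d (Finset.mem_singleton_self d)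
  have : G.Adj (h d) (h v) := h.map_rel_iff.2 hadj
  rw [hvfix] at this
  exact hv2 (h d) (Finset.mem_singleton_self _) this

/-- Splitting Lemma, finite version: for a finite set `F` of automorphisms of the random
graph and disjoint finite `A, B ⊆ V` there is a vertex `v` on which all distinct members
of `F` disagree, with `v` adjacent to all of `A` and to nothing in `B`. -/
theorem splitting_lemma_finite {V : Type*} [Countable V] [Infinite V]
    (G : SimpleGraph V) (hG : ExtensionProperty G)
    (F : Finset (G ≃g G)) (A B : Finset V) (hAB : Disjoint A B) :
    ∃ v : V, (∀ f ∈ F, ∀ g ∈ F, f ≠ g → f v ≠ g v) ∧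
      (∀ a ∈ A, G.Adj a v) ∧ (∀ b ∈ B, ¬ G.Adj b v) := by
  classical
  have key : ∀ P : Finset ((G ≃g G) × (G ≃g G)), (∀ p ∈ P, p.1 ≠ p.2) →
      ∀ A B : Finset V, Disjoint A B →
      ∃ v : V, (∀ p ∈ P, p.1 v ≠ p.2 v) ∧
        (∀ a ∈ A, G.Adj a v) ∧ (∀ b ∈ B, ¬ G.Adj b v) := by
    intro P
    induction P using Finset.induction_on with
    | empty =>
      intro _ A B hAB
      obtain ⟨v, h1, h2⟩ := hG A B hAB
      exact ⟨v, by simp, h1, h2⟩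
    | @insert p P hp IH =>
      intro hall A B hAB
      obtain ⟨f, g⟩ := p
      have hfg : f ≠ g := hall (f, g) (Finset.mem_insert_self _ _)
      have hD := disagree_infinite G hG f g hfg
      have hbad : (↑B ∪ (fun a => f.symm (g a)) '' ↑A : Set V).Finite :=
        (B.finite_toSet).union ((A.finite_toSet).image _)
      obtain ⟨y₁, hy₁D, hy₁bad⟩ := (hD.diff hbad).nonempty
      set y₂ : V := g.symm (f y₁) with hy₂
      have hy₁B : y₁ ∉ B := fun hc => hy₁bad (Or.inl hc)
      have hy₂A : y₂ ∉ A := by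
        intro hc
        apply hy₁bad
        right
        refine ⟨y₂, hc, ?_⟩
        simp [hy₂]
      have hy12 : y₁ ≠ y₂ := by
        intro hc
        apply hy₁D
        have : g y₁ = f y₁ := by
          conv_lhs => rw [hc]
          simp [hy₂]
        exact this.symm
      have hdisj : Disjoint (insert y₁ A) (insert y₂ B) := by
        rw [Finset.disjoint_left]
        intro x hx hx'
        rcases Finset.mem_insert.1 hx with rfl | hxA
        · rcases Finset.mem_insert.1 hx' with h | h
          · exact hy12 h
          · exact hy₁B h
        · rcases Finset.mem_insert.1 hx' with rfl | h
          · exact hy₂A hxA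
          · exact (Finset.disjoint_left.1 hAB hxA) h
      obtain ⟨v, hvP, hvA, hvB⟩ := IH (fun q hq => hall q (Finset.mem_insert_of_mem hq))
        (insert y₁ A) (insert y₂ B) hdisj
      refine ⟨v, ?_, fun a ha => hvA a (Finset.mem_insert_of_mem ha),
        fun b hb => hvB b (Finset.mem_insert_of_mem hb)⟩
      intro q hq
      rcases Finset.mem_insert.1 hq with rfl | hqP
      · -- q = (f, g)
        intro hc
        have h1 : G.Adj y₁ v := hvA y₁ (Finset.mem_insert_self _ _)
        have h2 : ¬ G.Adj y₂ v := hvB y₂ (Finset.mem_insert_self _ _)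
        have h1' : G.Adj (f y₁) (f v) := f.map_rel_iff.2 h1
        have h2' : ¬ G.Adj (g y₂) (g v) := fun hcc => h2 (g.map_rel_iff.1 hcc)
        have hgy₂ : g y₂ = f y₁ := by simp [hy₂]
        rw [hgy₂] at h2'
        rw [hc] at h1'
        exact h2' h1'
      · exact hvP q hqP
  obtain ⟨v, hv1, hv2, hv3⟩ := key ((F ×ˢ F).filter (fun q => q.1 ≠ q.2))
    (fun p hp => (Finset.mem_filter.1 hp).2) A B hAB
  refine ⟨v, fun f hf g hg hfg => ?_, hv2, hv3⟩
  exact hv1 (f, g) (Finset.mem_filter.2 ⟨Finset.mem_product.2 ⟨hf, hg⟩, hfg⟩)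
end

section
/- (Splitting Lemma, compact version) Let R be the random graph, K ⊆ Aut(R) a compact set (in the pointwise convergence topology), M ⊆ V a finite set of vertices, τ : M → {0,1} a function, and n ∈ ℕ. Then, for any fixed enumeration V = {v₀, v₁, …}, there exists a vertex v ∉ {v_i : i ≤ n} which realizes τ (i.e., for every w ∈ M, w is adjacent to v iff τ(w) = 1) and which is a splitting point for M and K, meaning: for all h, h' ∈ K with h|_M ≠ h'|_M we have h(v) ≠ h'(v) and h⁻¹(v) ≠ h'⁻¹(v). -/
/-- The pointwise convergence topology on the automorphism group of a graph on a
(discrete) vertex set: induced from `V^V × V^V` via `f ↦ (f, f⁻¹)`. -/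
def autTopology {V : Type*} (G : SimpleGraph V) : TopologicalSpace (G ≃g G) :=
  letI : TopologicalSpace V := ⊥
  TopologicalSpace.induced (fun f => ((f : V → V), (f.symm : V → V))) inferInstance

/-- `v` realizes `τ` over `M`: for every `w ∈ M`, `w` is adjacent to `v` iff `τ w = true`. -/
def Realizes {V : Type*} (G : SimpleGraph V) (M : Finset V) (τ : V → Bool) (v : V) : Prop :=
  ∀ w ∈ M, (G.Adj w v ↔ τ w = true)

/-!
By compactness, the automorphisms in `L = K ∪ K⁻¹` have finite orbits. For each `w` in the finite
set `N = M ∪ L M` and each `c` in the orbit of `w`, choose a marker `x(w,c)` adjacent to `w` and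
to no `g⁻¹ c` with `g w ≠ c`, the markers having pairwise disjoint `L`-orbits that avoid `M`. Then
let `v` realize `τ` on `M`, be adjacent to every `g x(w,c)` with `g w = c` and to no other point of
the marker orbits. If `g w ≠ g' w`, then for `c = g w` the vertex `g x(w,c)` is adjacent to `v`
while `g' x(w,c)` is not, so `g⁻¹ v ≠ g'⁻¹ v`. Applied to `h⁻¹, h'⁻¹` at `h w` this also gives
`h v ≠ h' v`.
-/

section

variable {V : Type*} {G : SimpleGraph V}

theorem SimpleGraph.Iso.adj_symm_apply_iff (g : G ≃g G) {x v : V} :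
    G.Adj x (g.symm v) ↔ G.Adj (g x) v := by
  rw [← g.map_adj_iff, g.apply_symm_apply]

theorem ExtensionProperty.exists_notMem_adj (hG : ExtensionProperty G) {A B F : Set V}
    (hA : A.Finite) (hB : B.Finite) (hF : F.Finite) (hAB : Disjoint A B) :
    ∃ v ∉ F, (∀ a ∈ A, G.Adj a v) ∧ ∀ b ∈ B, ¬ G.Adj b v := by
  classical
  obtain ⟨A, rfl⟩ := hA.exists_finset_coe
  obtain ⟨B, rfl⟩ := hB.exists_finset_coe
  obtain ⟨F, rfl⟩ := hF.exists_finset_coe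
  -- `y` is adjacent to all of `F`, so a vertex not adjacent to `y` lies outside `F`.
  obtain ⟨y, hyAF, -⟩ := hG (A ∪ F) ∅ (Finset.disjoint_empty_right _)
  have hyA : y ∉ A := fun hy => G.loopless.irrefl y (hyAF y (Finset.mem_union_left _ hy))
  obtain ⟨v, hvA, hvB⟩ := hG A (insert y B) <|
    Finset.disjoint_insert_right.2 ⟨hyA, Finset.disjoint_coe.1 hAB⟩
  refine ⟨v, fun hvF => hvB y (Finset.mem_insert_self y B) ?_, hvA,
    fun b hb => hvB b (Finset.mem_insert_of_mem hb)⟩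
  exact G.adj_symm (hyAF v (Finset.mem_union_right _ hvF))

def isoOrbit (L : Set (G ≃g G)) (s : Set V) : Set V :=
  Set.image2 (fun g x => g x) L s

variable {L : Set (G ≃g G)} {s : Set V} {g : G ≃g G} {x : V}

theorem apply_mem_isoOrbit (hg : g ∈ L) (hx : x ∈ s) : g x ∈ isoOrbit L s :=
  Set.mem_image2_of_mem hg hx

theorem apply_notMem_of_notMem_isoOrbit (hL : ∀ g ∈ L, g.symm ∈ L) (hg : g ∈ L)
    (hx : x ∉ isoOrbit L s) : g x ∉ s := fun hgx =>
  hx (by simpa using apply_mem_isoOrbit (hL g hg) hgx)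

theorem continuous_autTopology_embedding :
    letI : TopologicalSpace V := ⊥
    @Continuous _ _ (autTopology G) _ fun g : G ≃g G => ((g : V → V), (g.symm : V → V)) :=
  continuous_induced_dom

theorem continuous_symm_autTopology :
    @Continuous _ _ (autTopology G) (autTopology G) fun g : G ≃g G => g.symm := by
  let _ := autTopology G
  let _ : TopologicalSpace V := ⊥
  exact continuous_induced_rng.2 (continuous_swap.comp continuous_autTopology_embedding)

theorem IsCompact.finite_isoOrbit (hL : @IsCompact _ (autTopology G) L) (hs : s.Finite) :
    (isoOrbit L s).Finite := by
  let _ := autTopology G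
  let _ : TopologicalSpace V := ⊥
  have _ : DiscreteTopology V := ⟨rfl⟩
  have happly (x : V) : Continuous fun g : G ≃g G => g x :=
    (continuous_apply x).comp (continuous_fst.comp continuous_autTopology_embedding)
  rw [isoOrbit, ← Set.iUnion_image_right]
  exact hs.biUnion fun x _ => (hL.image (happly x)).finite_of_discrete

theorem exists_family_with_disjoint_orbits {ι : Type*} (hLs : ∀ g ∈ L, g.symm ∈ L)
    (hL : ∀ s : Set V, s.Finite → (isoOrbit L s).Finite)
    (P : ι → V → Prop) (hP : ∀ i (F : Set V), F.Finite → ∃ y ∉ F, P i y)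
    {M : Set V} (hM : M.Finite) (I : Finset ι) :
    ∃ x : ι → V, (∀ i ∈ I, P i (x i) ∧ ∀ g ∈ L, g (x i) ∉ M) ∧
      ∀ i ∈ I, ∀ j ∈ I, ∀ g ∈ L, ∀ g' ∈ L, g (x i) = g' (x j) → i = j := by
  classical
  induction I using Finset.induction_on with
  | empty => exact ⟨fun i => (hP i ∅ Set.finite_empty).choose, by simp, by simp⟩
  | insert a I ha ih =>
    obtain ⟨x, hxP, hxdisj⟩ := ih
    obtain ⟨y, hyF, hyP⟩ := hP a (isoOrbit L (M ∪ isoOrbit L (x '' I)))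
      (hL _ (hM.union (hL _ (I.finite_toSet.image x))))
    have hy (g) (hg : g ∈ L) : g y ∉ M ∪ isoOrbit L (x '' I) :=
      apply_notMem_of_notMem_isoOrbit hLs hg hyF
    have hynew : ∀ j ∈ I, ∀ g ∈ L, ∀ g' ∈ L, g y ≠ g' (x j) := fun j hj g hg g' hg' heq =>
      hy g hg (Or.inr (heq ▸ apply_mem_isoOrbit hg' (Set.mem_image_of_mem x hj)))
    have hupd : ∀ j ∈ I, Function.update x a y j = x j := fun j hj =>
      Function.update_of_ne (ne_of_mem_of_not_mem hj ha) _ _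
    refine ⟨Function.update x a y, fun i hi => ?_, fun i hi j hj g hg g' hg' heq => ?_⟩
    · rcases Finset.mem_insert.1 hi with rfl | hi
      · simpa only [Function.update_self] using ⟨hyP, fun g hg hgy => hy g hg (Or.inl hgy)⟩
      · simpa only [hupd i hi] using hxP i hi
    · rcases Finset.mem_insert.1 hi with rfl | hiI <;>
        rcases Finset.mem_insert.1 hj with rfl | hjI
      · rfl
      · rw [Function.update_self, hupd j hjI] at heq
        exact (hynew j hjI g hg g' hg' heq).elim
      · rw [Function.update_self, hupd i hiI] at heq
        exact (hynew i hiI g' hg' g hg heq.symm).elim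
      · rw [hupd i hiI, hupd j hjI] at heq
        exact hxdisj i hiI j hjI g hg g' hg' heq

theorem exists_realizes_separating (hG : ExtensionProperty G) (hLs : ∀ g ∈ L, g.symm ∈ L)
    (hL : ∀ s : Set V, s.Finite → (isoOrbit L s).Finite)
    {N F : Set V} (hN : N.Finite) (hF : F.Finite) (M : Finset V) (τ : V → Bool) :
    ∃ v ∉ F, Realizes G M τ v ∧
      ∀ g ∈ L, ∀ g' ∈ L, ∀ w ∈ N, g w ≠ g' w → g.symm v ≠ g'.symm v := by
  classical
  obtain ⟨I, hI⟩ := (hN.prod (hL N hN)).exists_finset_coe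
  let P : V × V → V → Prop := fun i y =>
    G.Adj i.1 y ∧ ∀ g ∈ L, g i.1 ≠ i.2 → ¬ G.Adj (g.symm i.2) y
  have hP : ∀ i (F : Set V), F.Finite → ∃ y ∉ F, P i y := by
    rintro ⟨w, c⟩ E hE
    have hZ : {z | ∃ g ∈ L, g w ≠ c ∧ g.symm c = z}.Finite :=
      (hL {c} (Set.finite_singleton c)).subset fun z ⟨g, hg, _, hz⟩ =>
        hz ▸ apply_mem_isoOrbit (hLs g hg) rfl
    have hwZ : Disjoint {w} {z | ∃ g ∈ L, g w ≠ c ∧ g.symm c = z} :=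
      Set.disjoint_singleton_left.2 fun ⟨g, _, hne, hz⟩ => hne (g.symm_apply_eq.1 hz).symm
    obtain ⟨y, hyF, hw, hZ⟩ := hG.exists_notMem_adj (Set.finite_singleton w) hZ hE hwZ
    exact ⟨y, hyF, hw w rfl, fun g hg hne => hZ _ ⟨g, hg, hne, rfl⟩⟩
  obtain ⟨x, hxP, hxdisj⟩ := exists_family_with_disjoint_orbits hLs hL P hP M.finite_toSet I
  set Big := isoOrbit L (x '' I)
  set Pos := {u | ∃ i ∈ I, ∃ g ∈ L, g i.1 = i.2 ∧ g (x i) = u}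
  have hPosBig : Pos ⊆ Big := fun _ ⟨i, hi, g, hg, _, hu⟩ =>
    hu ▸ apply_mem_isoOrbit hg (Set.mem_image_of_mem x hi)
  have hBigM : ∀ u ∈ Big, u ∉ M := by
    rintro _ ⟨g, hg, _, ⟨i, hi, rfl⟩, rfl⟩
    exact (hxP i hi).2 g hg
  -- Disjointness of the marker orbits gives `j = i`; then `g₁` carries the edge `x i ~ i.1` to
  -- `g (x i) ~ i.2`, contradicting the choice of `x i`.
  have hnotPos : ∀ i ∈ I, ∀ g ∈ L, g i.1 ≠ i.2 → g (x i) ∉ Pos := by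
    rintro i hi g hg hne ⟨j, hj, g₁, hg₁, hg₁j, heq⟩
    obtain rfl := hxdisj j hj i hi g₁ hg₁ g hg heq
    apply (hxP j hj).1.2 g hg hne
    rw [G.adj_comm, g.adj_symm_apply_iff, ← heq, ← hg₁j, g₁.map_adj_iff, G.adj_comm]
    exact (hxP j hj).1.1
  have hBigfin : Big.Finite := hL _ (I.finite_toSet.image x)
  obtain ⟨v, hvF, hvA, hvB⟩ := hG.exists_notMem_adj (A := Pos ∪ {m | m ∈ M ∧ τ m = true})
    (B := (Big \ Pos) ∪ {m | m ∈ M ∧ τ m = false})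
    ((hBigfin.subset hPosBig).union (M.finite_toSet.subset fun _ h => h.1))
    (hBigfin.sdiff.union (M.finite_toSet.subset fun _ h => h.1)) hF <| by
      refine Set.disjoint_left.2 ?_
      rintro u (hPos | ⟨hM, hτ⟩) (⟨hBig, hnPos⟩ | ⟨hM', hτ'⟩)
      · exact hnPos hPos
      · exact hBigM u (hPosBig hPos) hM'
      · exact hBigM u hBig hM
      · simp [hτ] at hτ'
  refine ⟨v, hvF, fun w hw => ?_, fun g hg g' hg' w hw hne heq => ?_⟩
  · cases hτ : τ w
    · exact iff_of_false (hvB w (Or.inr ⟨hw, hτ⟩)) Bool.false_ne_true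
    · exact iff_of_true (hvA w (Or.inr ⟨hw, hτ⟩)) rfl
  · have hi : (w, g w) ∈ I := by
      rw [← Finset.mem_coe, hI]
      exact ⟨hw, apply_mem_isoOrbit hg hw⟩
    have hadj : G.Adj (g (x (w, g w))) v := hvA _ (Or.inl ⟨_, hi, g, hg, rfl, rfl⟩)
    have hnadj : ¬ G.Adj (g' (x (w, g w))) v := hvB _ <| Or.inl
      ⟨apply_mem_isoOrbit hg' (Set.mem_image_of_mem x hi), hnotPos _ hi g' hg' hne.symm⟩
    rw [← g.adj_symm_apply_iff, heq, g'.adj_symm_apply_iff] at hadj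
    exact hnadj hadj

end

theorem splitting_lemma_general {V : Type*}
    (G : SimpleGraph V) (hG : ExtensionProperty G) (e : ℕ ≃ V)
    (K : Set (G ≃g G)) (hK : @IsCompact _ (autTopology G) K)
    (M : Finset V) (τ : V → Bool) (n : ℕ) :
    ∃ v : V, (∀ i ≤ n, v ≠ e i) ∧ Realizes G M τ v ∧
      ∀ h ∈ K, ∀ h' ∈ K, (∃ w ∈ M, h w ≠ h' w) →
        h v ≠ h' v ∧ h.symm v ≠ h'.symm v := by
  set L := K ∪ (fun h : G ≃g G => h.symm) '' K
  have hLs : ∀ g ∈ L, g.symm ∈ L := by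
    rintro g (hg | ⟨h, hh, rfl⟩)
    · exact Or.inr ⟨g, hg, rfl⟩
    · exact Or.inl hh
  have hL : @IsCompact _ (autTopology G) L := by
    let _ := autTopology G
    exact hK.union (hK.image continuous_symm_autTopology)
  obtain ⟨v, hvF, hvM, hsep⟩ := exists_realizes_separating hG hLs (fun _ => hL.finite_isoOrbit)
    (M.finite_toSet.union (hL.finite_isoOrbit M.finite_toSet)) ((Set.finite_Iic n).image e) M τ
  refine ⟨v, fun i hi hvi => hvF ⟨i, hi, hvi.symm⟩, hvM, ?_⟩
  rintro h hh h' hh' ⟨w, hw, hne⟩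
  refine ⟨?_, hsep h (Or.inl hh) h' (Or.inl hh') w (Or.inl hw) hne⟩
  have hne' : h.symm (h w) ≠ h'.symm (h w) := by
    rw [h.symm_apply_apply]
    exact fun hw' => hne (h'.symm_apply_eq.1 hw'.symm)
  simpa using hsep h.symm (hLs h (Or.inl hh)) h'.symm (hLs h' (Or.inl hh')) (h w)
    (Or.inr (apply_mem_isoOrbit (Or.inl hh) hw)) hne'

/-- Splitting Lemma, compact version: for compact `K ⊆ Aut(R)`, finite `M`, `τ : M → 2` and
`n ∈ ℕ`, there is a vertex `v ∉ {v₀, …, vₙ}` realizing `τ` which is a splitting point for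
`M` and `K`. -/
theorem splitting_lemma {V : Type*} [Countable V] [Infinite V]
    (G : SimpleGraph V) (hG : ExtensionProperty G) (e : ℕ ≃ V)
    (K : Set (G ≃g G)) (hK : @IsCompact _ (autTopology G) K)
    (M : Finset V) (τ : V → Bool) (n : ℕ) :
    ∃ v : V, (∀ i ≤ n, v ≠ e i) ∧ Realizes G M τ v ∧
      ∀ h ∈ K, ∀ h' ∈ K, (∃ w ∈ M, h w ≠ h' w) →
        h v ≠ h' v ∧ h.symm v ≠ h'.symm v :=
  splitting_lemma_general G hG e K hK M τ n
end

section
/- Let R be the random graph and let p, p' be finite partial automorphisms of R with p(w₀) ≠ p'(w₀) for some vertex w₀ in both domains. Let K ⊆ Aut(R) be compact and N ∈ ℕ. Then there exist disjoint finite sets of vertices A, A' ⊆ V \ {v_i : i ≤ N} such that: for any vertex v adjacent to every element of A and not adjacent to any element of A', and for any h ∈ K extending p and h' ∈ K extending p', we have h(v) ≠ h'(v). -/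
/-- From the extension property one can in addition require the witness to
avoid any given finite set `W`. -/
lemma exists_witness_avoiding {V : Type*} [DecidableEq V] {G : SimpleGraph V}
    (hG : ExtensionProperty G) (A B W : Finset V) (hAB : Disjoint A B) :
    ∃ z, z ∉ W ∧ (∀ a ∈ A, G.Adj a z) ∧ (∀ b ∈ B, ¬ G.Adj b z) := by
  choose c hc using fun w : V => hG (insert w A) ∅ (Finset.disjoint_empty_right _)
  have hdisj : Disjoint A (B ∪ W.image c) := by
    rw [Finset.disjoint_union_right]
    refine ⟨hAB, Finset.disjoint_right.mpr ?_⟩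
    intro x hxC hxA
    obtain ⟨w, hw, rfl⟩ := Finset.mem_image.mp hxC
    exact G.irrefl ((hc w).1 (c w) (Finset.mem_insert_of_mem hxA))
  obtain ⟨z, hz1, hz2⟩ := hG A (B ∪ W.image c) hdisj
  refine ⟨z, fun hzW => ?_, hz1, fun b hb => hz2 b (Finset.mem_union_left _ hb)⟩
  have h1 : G.Adj z (c z) := (hc z).1 z (Finset.mem_insert_self _ _)
  exact hz2 (c z) (Finset.mem_union_right _ (Finset.mem_image_of_mem c hzW)) h1.symm

/-- If `p, p'` are finite partial automorphisms of the random graph disagreeing at `w₀`,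
`K ⊆ Aut(R)` is compact and `N ∈ ℕ`, then there are disjoint finite sets `A, A'` of
vertices avoiding `{v₀, …, v_N}` such that any vertex adjacent to all of `A` and to
nothing in `A'` is mapped to different points by any `h ∈ K ∩ [p]` and `h' ∈ K ∩ [p']`. -/
theorem separating_sets_for_pair {V : Type*} [Countable V] [Infinite V]
    (G : SimpleGraph V) (hG : ExtensionProperty G) (e : ℕ ≃ V)
    (K : Set (G ≃g G)) (hK : @IsCompact _ (autTopology G) K)
    (D D' : Finset V) (p p' : V → V)
    (hpinj : Set.InjOn p ↑D) (hp'inj : Set.InjOn p' ↑D')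
    (hpadj : ∀ x ∈ D, ∀ y ∈ D, G.Adj x y ↔ G.Adj (p x) (p y))
    (hp'adj : ∀ x ∈ D', ∀ y ∈ D', G.Adj x y ↔ G.Adj (p' x) (p' y))
    (w₀ : V) (hw₀ : w₀ ∈ D) (hw₀' : w₀ ∈ D') (hne : p w₀ ≠ p' w₀) (N : ℕ) :
    ∃ A A' : Finset V, Disjoint A A' ∧
      (∀ x ∈ A, ∀ i ≤ N, x ≠ e i) ∧ (∀ x ∈ A', ∀ i ≤ N, x ≠ e i) ∧
      ∀ v : V, (∀ a ∈ A, G.Adj a v) → (∀ a ∈ A', ¬ G.Adj a v) →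
        ∀ h ∈ K, (∀ w ∈ D, h w = p w) →
        ∀ h' ∈ K, (∀ w ∈ D', h' w = p' w) → h v ≠ h' v := by
  classical
  letI tV : TopologicalSpace V := ⊥
  haveI : DiscreteTopology V := ⟨rfl⟩
  letI tA : TopologicalSpace (G ≃g G) := autTopology G
  have hφ : Continuous (fun f : G ≃g G => ((f : V → V), ((f.symm : V → V)))) :=
    continuous_induced_dom
  have hev : ∀ w : V, Continuous (fun f : G ≃g G => f w) :=
    fun w => (continuous_apply w).comp (continuous_fst.comp hφ)
  have hev' : ∀ w : V, Continuous (fun f : G ≃g G => f.symm w) :=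
    fun w => (continuous_apply w).comp (continuous_snd.comp hφ)
  -- the compact set of pairs of extensions
  set S : Set ((G ≃g G) × (G ≃g G)) :=
    {x | x.1 ∈ K ∧ x.2 ∈ K ∧ (∀ w ∈ D, x.1 w = p w) ∧ (∀ w ∈ D', x.2 w = p' w)} with hSdef
  have hC : IsClosed {x : (G ≃g G) × (G ≃g G) |
      (∀ w ∈ D, x.1 w = p w) ∧ (∀ w ∈ D', x.2 w = p' w)} := by
    have h1 : IsClosed {x : (G ≃g G) × (G ≃g G) | ∀ w ∈ D, x.1 w = p w} := by
      have he : {x : (G ≃g G) × (G ≃g G) | ∀ w ∈ D, x.1 w = p w}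
          = ⋂ w ∈ (D : Set V), {x : (G ≃g G) × (G ≃g G) | x.1 w = p w} := by
        ext x; simp
      rw [he]
      exact isClosed_biInter fun w _ =>
        isClosed_singleton.preimage ((hev w).comp continuous_fst)
    have h2 : IsClosed {x : (G ≃g G) × (G ≃g G) | ∀ w ∈ D', x.2 w = p' w} := by
      have he : {x : (G ≃g G) × (G ≃g G) | ∀ w ∈ D', x.2 w = p' w}
          = ⋂ w ∈ (D' : Set V), {x : (G ≃g G) × (G ≃g G) | x.2 w = p' w} := by
        ext x; simp
      rw [he]
      exact isClosed_biInter fun w _ =>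
        isClosed_singleton.preimage ((hev w).comp continuous_snd)
    exact h1.inter h2
  have hS : IsCompact S := by
    have hEq : S = (K ×ˢ K) ∩ {x : (G ≃g G) × (G ≃g G) |
        (∀ w ∈ D, x.1 w = p w) ∧ (∀ w ∈ D', x.2 w = p' w)} := by
      ext x
      simp only [hSdef, Set.mem_inter_iff, Set.mem_prod, Set.mem_setOf_eq]
      tauto
    rw [hEq]
    exact (hK.prod hK).inter_right hC
  -- the finite set to avoid
  set F : Finset V := (Finset.range (N + 1)).image e with hFdef
  -- choose the separating witness for each pair
  have hzex : ∀ x : (G ≃g G) × (G ≃g G),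
      ∃ zx, zx ∉ (F.image x.1 ∪ F.image x.2) ∧
        G.Adj (p w₀) zx ∧ ¬ G.Adj (p' w₀) zx := by
    intro x
    obtain ⟨zx, h1, h2, h3⟩ := exists_witness_avoiding hG {p w₀} {p' w₀}
      (F.image x.1 ∪ F.image x.2) (Finset.disjoint_singleton.mpr hne)
    exact ⟨zx, h1, h2 _ (Finset.mem_singleton_self _), h3 _ (Finset.mem_singleton_self _)⟩
  choose z hzF hzadj hznadj using hzex
  -- the clopen neighbourhoods
  set U : (G ≃g G) × (G ≃g G) → Set ((G ≃g G) × (G ≃g G)) :=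
    fun x => {gg | gg.1.symm (z x) = x.1.symm (z x) ∧ gg.2.symm (z x) = x.2.symm (z x)}
      with hUdef
  have hUopen : ∀ x, IsOpen (U x) := by
    intro x
    apply IsOpen.inter
    · exact (isOpen_discrete {x.1.symm (z x)}).preimage ((hev' (z x)).comp continuous_fst)
    · exact (isOpen_discrete {x.2.symm (z x)}).preimage ((hev' (z x)).comp continuous_snd)
  obtain ⟨t, hts, htcov⟩ := hS.elim_nhds_subcover U
    (fun x _ => (hUopen x).mem_nhds ⟨rfl, rfl⟩)
  refine ⟨t.image (fun x => x.1.symm (z x)), t.image (fun x => x.2.symm (z x)), ?_, ?_, ?_, ?_⟩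
  · -- disjointness, via adjacency / non-adjacency to w₀
    rw [Finset.disjoint_left]
    intro a ha ha'
    obtain ⟨x, hx, rfl⟩ := Finset.mem_image.mp ha
    obtain ⟨y, hy, hxy⟩ := Finset.mem_image.mp ha'
    have hxS := hts x hx
    have hyS := hts y hy
    have hadj : G.Adj w₀ (x.1.symm (z x)) := by
      have h2 : G.Adj (x.1 w₀) (x.1 (x.1.symm (z x))) := by
        rw [RelIso.apply_symm_apply, hxS.2.2.1 w₀ hw₀]
        exact hzadj x
      exact x.1.map_rel_iff.mp h2
    have hnadj : ¬ G.Adj w₀ (y.2.symm (z y)) := by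
      intro hcon
      have h2 : G.Adj (y.2 w₀) (y.2 (y.2.symm (z y))) := y.2.map_rel_iff.mpr hcon
      rw [RelIso.apply_symm_apply, hyS.2.2.2 w₀ hw₀'] at h2
      exact hznadj y h2
    rw [← hxy] at hadj
    exact hnadj hadj
  · -- A avoids e 0, …, e N
    intro a ha i hi hae
    obtain ⟨x, hx, rfl⟩ := Finset.mem_image.mp ha
    apply hzF x
    have heF : e i ∈ F := Finset.mem_image_of_mem e (Finset.mem_range.mpr (Nat.lt_succ_of_le hi))
    have : x.1 (x.1.symm (z x)) = x.1 (e i) := by rw [hae]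
    rw [RelIso.apply_symm_apply] at this
    rw [this]
    exact Finset.mem_union_left _ (Finset.mem_image_of_mem _ heF)
  · -- A' avoids e 0, …, e N
    intro a ha i hi hae
    obtain ⟨x, hx, rfl⟩ := Finset.mem_image.mp ha
    apply hzF x
    have heF : e i ∈ F := Finset.mem_image_of_mem e (Finset.mem_range.mpr (Nat.lt_succ_of_le hi))
    have : x.2 (x.2.symm (z x)) = x.2 (e i) := by rw [hae]
    rw [RelIso.apply_symm_apply] at this
    rw [this]
    exact Finset.mem_union_right _ (Finset.mem_image_of_mem _ heF)
  · -- the separation property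
    intro v hvA hvA' h hhK hhp h' hh'K hh'p heq
    have hmem : (h, h') ∈ S := ⟨hhK, hh'K, hhp, hh'p⟩
    have := htcov hmem
    simp only [Set.mem_iUnion] at this
    obtain ⟨x, hx, hU1, hU2⟩ := this
    -- h v is adjacent to z x
    have h1 : G.Adj (h.symm (z x)) v := by
      rw [hU1]
      exact hvA _ (Finset.mem_image_of_mem _ hx)
    have h2 : ¬ G.Adj (h'.symm (z x)) v := by
      rw [hU2]
      exact hvA' _ (Finset.mem_image_of_mem _ hx)
    have h3 : G.Adj (z x) (h v) := by
      have := h.map_rel_iff.mpr h1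
      rwa [RelIso.apply_symm_apply] at this
    have h4 : ¬ G.Adj (z x) (h' v) := by
      intro hcon
      apply h2
      have : G.Adj (h'.symm (z x)) (h'.symm (h' v)) := h'.symm.map_rel_iff.mpr hcon
      rwa [RelIso.symm_apply_apply] at this
    rw [heq] at h3
    exact h4 h3
end

section
/- Let R be the random graph and f ∈ Aut(R) an automorphism with property (*): (i) f has only finitely many finite orbits and infinitely many infinite orbits, and (ii) for every finite M ⊆ V and τ : M → 2 there exists a vertex v realizing τ with v not in the union of f-orbits of elements of M. Let N be the union of the finite orbits of f, and let τ : N → 2. Then at least one of the following holds: (1) for every finite N̄ ⊇ N and every τ̄ : N̄ → 2 extending τ there is a vertex v realizing τ̄ with v ∉ O^f(N̄) and v not adjacent to f(v); or (2) for every finite N̄ ⊇ N and every extension τ̄ : N̄ → 2 of τ there is a vertex v realizing τ̄ with v ∉ O^f(N̄) and v adjacent to f(v). -/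
/-- The orbit `O^f(v) = {f^k v : k ∈ ℤ}` of a vertex under an automorphism. -/
def fOrbit {V : Type*} {G : SimpleGraph V} (f : G ≃g G) (v : V) : Set V :=
  Set.range fun k : ℤ => (f.toEquiv ^ k) v

/-- Property (*): only finitely many finite orbits, infinitely many infinite orbits, and
every finite adjacency pattern is realized by a vertex outside the orbits of its domain. -/
def StarProperty {V : Type*} (G : SimpleGraph V) (f : G ≃g G) : Prop :=
  {v : V | (fOrbit f v).Finite}.Finite ∧
  (∀ W : Finset V, ∃ v : V, (fOrbit f v).Infinite ∧ ∀ w ∈ W, v ∉ fOrbit f w) ∧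
  (∀ M : Finset V, ∀ τ : V → Bool, ∃ v : V, Realizes G M τ v ∧ ∀ w ∈ M, v ∉ fOrbit f w)


/-!
Suppose alternative (1) fails, witnessed by a finite `N₀ ⊇ N` and an extension `τ₀` all of whose
realizations off the orbits of `N₀` are adjacent to their `f`-images. Given any other `N̄ ⊇ N`
and `τ̄`, choose `k` a multiple of the periods of the finite orbits in `N₀` and so large that `f^k`
moves the points of `N₀` with infinite orbit off `N̄`. Property (*) yields `v` realizing `τ̄` on
`N̄` and `τ₀ ∘ f^(-k)` on `f^k N₀`, off all their orbits; then `f^(-k) v` is one of the forced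
realizations of `τ₀`, so `v` is adjacent to `f v` as well.
-/

namespace MulAction

variable {G α : Type*} [Group G] [MulAction G α] {g : G} {a : α}

theorem injective_zpow_smul_of_period_eq_zero (h : period g a = 0) :
    Function.Injective fun k : ℤ => g ^ k • a := by
  intro i j hij
  have hfix : g ^ (i - j) • a = a := by
    rw [show i - j = -j + i by ring, zpow_add, mul_smul, zpow_neg, inv_smul_eq_iff]
    exact hij
  rwa [zpow_smul_eq_iff_period_dvd, h, Nat.cast_zero, zero_dvd_iff, sub_eq_zero] at hfix

theorem finite_range_zpow_smul_iff :
    (Set.range fun k : ℤ => g ^ k • a).Finite ↔ period g a ≠ 0 := by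
  refine ⟨fun hfin hp => Set.infinite_range_of_injective
    (injective_zpow_smul_of_period_eq_zero hp) hfin, fun hp => ?_⟩
  refine ((Set.finite_Ico 0 (period g a : ℤ)).image fun k => g ^ k • a).subset ?_
  rintro _ ⟨k, rfl⟩
  have hp' : (0 : ℤ) < period g a := by omega
  exact ⟨k % period g a, ⟨Int.emod_nonneg _ hp'.ne', Int.emod_lt_of_pos _ hp'⟩,
    zpow_mod_period_smul k⟩

theorem exists_zpow_smul_fixes_or_avoids (g : G) (A T : Finset α) :
    ∃ k : ℤ, ∀ a ∈ A, (period g a ≠ 0 → g ^ k • a = a) ∧ (period g a = 0 → g ^ k • a ∉ T) := by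
  classical
  set m : ℕ := ∏ a ∈ A with period g a ≠ 0, period g a
  have hm : (m : ℤ) ≠ 0 := Nat.cast_ne_zero.mpr <|
    Finset.prod_ne_zero_iff.mpr fun a ha => (Finset.mem_filter.mp ha).2
  have hbad : (⋃ a ∈ A.filter (period g · = 0), (fun k : ℤ => g ^ k • a) ⁻¹' T).Finite :=
    (Finset.finite_toSet _).biUnion fun a ha => T.finite_toSet.preimage
      (injective_zpow_smul_of_period_eq_zero (Finset.mem_filter.mp ha).2).injOn
  obtain ⟨_, ⟨t, rfl⟩, ht⟩ :=
    (Set.infinite_range_of_injective (mul_right_injective₀ hm)).exists_notMem_finite hbad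
  refine ⟨m * t, fun a ha => ⟨fun hp => ?_, fun hp hmem => ht ?_⟩⟩
  · refine zpow_smul_eq_iff_period_dvd.mpr (dvd_mul_of_dvd_left ?_ t)
    exact Int.natCast_dvd_natCast.mpr (Finset.dvd_prod_of_mem _ (Finset.mem_filter.mpr ⟨ha, hp⟩))
  · exact Set.mem_biUnion (Finset.mem_filter.mpr ⟨ha, hp⟩) hmem

end MulAction

section Orbits

open MulAction

variable {V : Type*} {G : SimpleGraph V}

theorem fOrbit_eq_range_zpow_smul (f : G ≃g G) (v : V) :
    fOrbit f v = Set.range fun k : ℤ => f ^ k • v := by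
  have hperm : ∀ k : ℤ, f.toEquiv ^ k = toPerm (f ^ k) := fun k =>
    (map_zpow (toPermHom (G ≃g G) V) f k).symm
  simp only [fOrbit, hperm]
  rfl

theorem fOrbit_finite_iff (f : G ≃g G) (v : V) : (fOrbit f v).Finite ↔ period f v ≠ 0 := by
  rw [fOrbit_eq_range_zpow_smul, finite_range_zpow_smul_iff]

theorem apply_mem_fOrbit_apply {f g : G ≃g G} (hgf : Commute g f) {u w : V}
    (hu : u ∈ fOrbit f w) : g u ∈ fOrbit f (g w) := by
  rw [fOrbit_eq_range_zpow_smul] at hu ⊢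
  obtain ⟨j, rfl⟩ := hu
  exact ⟨j, by simp only [← RelIso.smul_def, smul_smul, (hgf.zpow_right j).eq]⟩

theorem exists_realizes_adj_of_forced {f g : G ≃g G} (hgf : Commute g f)
    (hreal : ∀ (M : Finset V) (τ : V → Bool), ∃ v, Realizes G M τ v ∧ ∀ w ∈ M, v ∉ fOrbit f w)
    {N₀ Nb : Finset V} {τ₀ τb : V → Bool}
    (hforced : ∀ u, Realizes G N₀ τ₀ u → (∀ w ∈ N₀, u ∉ fOrbit f w) → G.Adj u (f u))
    (hg : ∀ w ∈ N₀, (g w = w ∧ w ∈ Nb ∧ τb w = τ₀ w) ∨ g w ∉ Nb) :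
    ∃ v, Realizes G Nb τb v ∧ (∀ w ∈ Nb, v ∉ fOrbit f w) ∧ G.Adj v (f v) := by
  classical
  -- realize `τb` on `Nb` together with the `g`-translate of `τ₀`, then pull back along `g`
  obtain ⟨v, hv, hvorb⟩ :=
    hreal (Nb ∪ N₀.image g) fun x => if x ∈ Nb then τb x else τ₀ (g⁻¹ x)
  have hgN₀ : ∀ w ∈ N₀, g w ∈ Nb ∪ N₀.image g := fun w hw =>
    Finset.mem_union_right _ (Finset.mem_image_of_mem g hw)
  set u := g⁻¹ v
  have hgu : g u = v := RelIso.apply_inv_self g v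
  have hu : Realizes G N₀ τ₀ u := by
    intro w hw
    rw [← g.map_adj_iff, hgu, hv _ (hgN₀ w hw)]
    rcases hg w hw with ⟨hfix, hwNb, hτ⟩ | hout
    · simp only [hfix, hwNb, if_true, hτ]
    · simp only [hout, if_false, RelIso.inv_apply_self]
  have huorb : ∀ w ∈ N₀, u ∉ fOrbit f w := fun w hw hmem =>
    hvorb _ (hgN₀ w hw) (hgu ▸ apply_mem_fOrbit_apply hgf hmem)
  refine ⟨v, fun w hw => ?_, fun w hw => hvorb w (Finset.mem_union_left _ hw), ?_⟩
  · simpa only [hw, if_true] using hv w (Finset.mem_union_left _ hw)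
  · have hgfu : g (f u) = f v := by rw [← hgu, ← RelIso.mul_apply, hgf.eq, RelIso.mul_apply]
    simpa only [hgu, hgfu] using g.map_adj_iff.mpr (hforced u hu huorb)

end Orbits

theorem star_dichotomy_general {V : Type*}
    (G : SimpleGraph V)
    (f : G ≃g G) (hf : StarProperty G f) (τ : V → Bool) :
    (∀ Nb : Finset V, {v : V | (fOrbit f v).Finite} ⊆ ↑Nb →
      ∀ τb : V → Bool, (∀ w : V, (fOrbit f w).Finite → τb w = τ w) →
        ∃ v : V, Realizes G Nb τb v ∧ (∀ w ∈ Nb, v ∉ fOrbit f w) ∧ ¬ G.Adj v (f v)) ∨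
    (∀ Nb : Finset V, {v : V | (fOrbit f v).Finite} ⊆ ↑Nb →
      ∀ τb : V → Bool, (∀ w : V, (fOrbit f w).Finite → τb w = τ w) →
        ∃ v : V, Realizes G Nb τb v ∧ (∀ w ∈ Nb, v ∉ fOrbit f w) ∧ G.Adj v (f v)) := by
  refine or_iff_not_imp_left.mpr fun hnot => ?_
  push Not at hnot
  obtain ⟨N₀, -, τ₀, hτ₀, hforced⟩ := hnot
  intro Nb hNb τb hτb
  obtain ⟨k, hk⟩ := MulAction.exists_zpow_smul_fixes_or_avoids f N₀ Nb
  refine exists_realizes_adj_of_forced (Commute.zpow_self f k) hf.2.2 hforced fun w hw => ?_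
  by_cases hp : MulAction.period f w = 0
  · exact Or.inr ((hk w hw).2 hp)
  · have hfin := (fOrbit_finite_iff f w).mpr hp
    exact Or.inl ⟨(hk w hw).1 hp, hNb hfin, (hτb w hfin).trans (hτ₀ w hfin).symm⟩

/-- Dichotomy for extensions of a pattern `τ` on the union `N` of finite orbits of an
automorphism `f` with property (*): either every finite extension of `τ` is realized off
the relevant orbits by some `v` with `v` not adjacent to `f v`, or every finite extension
is realized off the relevant orbits by some `v` with `v` adjacent to `f v`. -/
theorem star_dichotomy {V : Type*} [Countable V] [Infinite V]
    (G : SimpleGraph V) (hG : ExtensionProperty G)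
    (f : G ≃g G) (hf : StarProperty G f) (τ : V → Bool) :
    (∀ Nb : Finset V, {v : V | (fOrbit f v).Finite} ⊆ ↑Nb →
      ∀ τb : V → Bool, (∀ w : V, (fOrbit f w).Finite → τb w = τ w) →
        ∃ v : V, Realizes G Nb τb v ∧ (∀ w ∈ Nb, v ∉ fOrbit f w) ∧ ¬ G.Adj v (f v)) ∨
    (∀ Nb : Finset V, {v : V | (fOrbit f v).Finite} ⊆ ↑Nb →
      ∀ τb : V → Bool, (∀ w : V, (fOrbit f w).Finite → τb w = τ w) →
        ∃ v : V, Realizes G Nb τb v ∧ (∀ w ∈ Nb, v ∉ fOrbit f w) ∧ G.Adj v (f v)) :=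
  star_dichotomy_general G f hf τ
end

section
/- There are continuum many pairwise distinct conjugacy classes in Aut(R) consisting of automorphisms f with property (*): concretely, for every function p : ℕ∖{0} → {0,1} there exists f_p ∈ Aut(R) such that f_p has no finite orbits, and for every vertex v and every n ≥ 1, v is adjacent to f_p^n(v) if and only if p(n) = 0; moreover, for p ≠ p' the automorphisms f_p and f_{p'} are not conjugate in Aut(R). -/
/-!
Countable graphs with the extension property are all isomorphic (back and forth), so it suffices
to realise each pattern `p` by an automorphism of *some* such graph. On `ℤ × ℕ` let column `m` be
a copy of `ℤ` in which `i ~ j` iff `p |i - j| = false`, and join `(k, m)` to an earlier-column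
vertex `x` iff the offset of `x` relative to `(k, m)` lies in the finite set coded by `m`. The
shift `(k, m) ↦ (k + 1, m)` is an automorphism with the pattern `p`, and since every finite set
has codes in arbitrarily late columns, the graph has the extension property. Finally,
"`v ~ f^n v` for all `v`" is invariant under conjugation, so different patterns give
non-conjugate automorphisms.
-/

theorem Function.Semiconj.perm_pow_apply {α β : Type*} {e : α → β} {s : Equiv.Perm α}
    {f : Equiv.Perm β} (h : Function.Semiconj e s f) (n : ℕ) (x : α) :
    (f ^ n) (e x) = e ((s ^ n) x) := by
  simp only [Equiv.Perm.coe_pow]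
  exact (h.iterate_right n x).symm

section Graphs

variable {W V : Type*} {H : SimpleGraph W} {G : SimpleGraph V}

theorem ExtensionProperty.exists_fresh (hG : ExtensionProperty G) {A B : Finset V}
    (hAB : Disjoint A B) :
    ∃ v, v ∉ A ∧ v ∉ B ∧ (∀ a ∈ A, G.Adj a v) ∧ ∀ b ∈ B, ¬ G.Adj b v := by
  classical
  -- a vertex `t` adjacent to all of `A ∪ B` lies outside `A`; a witness not adjacent to `t`
  -- cannot lie in `B`
  obtain ⟨t, ht, -⟩ := hG (A ∪ B) ∅ (Finset.disjoint_empty_right _)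
  have htA : t ∉ A := fun htA => G.irrefl (ht t (Finset.mem_union_left _ htA))
  obtain ⟨v, hvA, hvB⟩ := hG A (insert t B) (Finset.disjoint_insert_right.mpr ⟨htA, hAB⟩)
  refine ⟨v, fun hv => G.irrefl (hvA v hv),
    fun hv => hvB t (Finset.mem_insert_self _ _) (ht v (Finset.mem_union_right _ hv)).symm,
    hvA, fun b hb => hvB b (Finset.mem_insert_of_mem hb)⟩

variable (H G) in
/-- The assignments `p.1 ↦ p.2` and `q.1 ↦ q.2` can belong to one partial isomorphism. -/
def PairsCompatible (p q : W × V) : Prop :=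
  (p.1 = q.1 ↔ p.2 = q.2) ∧ (H.Adj p.1 q.1 ↔ G.Adj p.2 q.2)

theorem PairsCompatible.symm {p q : W × V} (h : PairsCompatible H G p q) :
    PairsCompatible H G q p :=
  ⟨eq_comm.trans (h.1.trans eq_comm), (H.adj_comm _ _).trans (h.2.trans (G.adj_comm _ _))⟩

theorem PairsCompatible.swap {p q : W × V} (h : PairsCompatible H G p q) :
    PairsCompatible G H p.swap q.swap :=
  ⟨h.1.symm, h.2.symm⟩

variable (H G) in
/-- Finite partial isomorphisms, encoded by their graphs as in `Order.PartialIso`. -/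
abbrev PartialGraphIso : Type _ :=
  { f : Finset (W × V) // ∀ p ∈ f, ∀ q ∈ f, PairsCompatible H G p q }

namespace PartialGraphIso

instance : Inhabited (PartialGraphIso H G) := ⟨⟨∅, by simp⟩⟩

theorem exists_across (hG : ExtensionProperty G) (f : PartialGraphIso H G) (w : W) :
    ∃ v, ∀ p ∈ f.val, PairsCompatible H G p (w, v) := by
  classical
  by_cases hw : ∃ v, (w, v) ∈ f.val
  · obtain ⟨v, hv⟩ := hw
    exact ⟨v, fun p hp => f.prop p hp _ hv⟩
  let A := {p ∈ f.val | H.Adj p.1 w}.image Prod.snd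
  let B := {p ∈ f.val | ¬ H.Adj p.1 w}.image Prod.snd
  have hAB : Disjoint A B := by
    simp only [A, B, Finset.disjoint_left, Finset.mem_image, Finset.mem_filter]
    rintro _ ⟨p, ⟨hp, hpw⟩, rfl⟩ ⟨q, ⟨hq, hqw⟩, hqp⟩
    exact hqw ((f.prop q hq p hp).1.mpr hqp ▸ hpw)
  obtain ⟨v, hvA', hvB', hvA, hvB⟩ := hG.exists_fresh hAB
  refine ⟨v, fun ⟨x, y⟩ hp => ?_⟩
  have hxw : x ≠ w := by rintro rfl; exact hw ⟨y, hp⟩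
  by_cases hxw' : H.Adj x w
  · have hyA : y ∈ A := Finset.mem_image_of_mem Prod.snd (Finset.mem_filter.mpr ⟨hp, hxw'⟩)
    exact ⟨iff_of_false hxw (by rintro rfl; exact hvA' hyA), iff_of_true hxw' (hvA y hyA)⟩
  · have hyB : y ∈ B := Finset.mem_image_of_mem Prod.snd (Finset.mem_filter.mpr ⟨hp, hxw'⟩)
    exact ⟨iff_of_false hxw (by rintro rfl; exact hvB' hyB), iff_of_false hxw' (hvB y hyB)⟩

variable (G) in
def definedAtLeft (hG : ExtensionProperty G) (w : W) : Order.Cofinal (PartialGraphIso H G) where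
  carrier := {f | ∃ v, (w, v) ∈ f.val}
  isCofinal f := by
    classical
    obtain ⟨v, hv⟩ := exists_across hG f w
    refine ⟨⟨insert (w, v) f.val, ?_⟩, ⟨v, Finset.mem_insert_self _ _⟩, Finset.subset_insert _ _⟩
    simp only [Finset.mem_insert]
    rintro p (rfl | hp) q (rfl | hq)
    · exact ⟨iff_of_true rfl rfl, iff_of_false H.irrefl G.irrefl⟩
    · exact (hv q hq).symm
    · exact hv p hp
    · exact f.prop p hp q hq

def swap (f : PartialGraphIso H G) : PartialGraphIso G H :=
  ⟨f.val.map (Equiv.prodComm W V).toEmbedding, by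
    simp only [Finset.mem_map_equiv, Equiv.prodComm_symm, Equiv.prodComm_apply]
    exact fun p hp q hq => by simpa using (f.prop _ hp _ hq).swap⟩

theorem mem_swap {f : PartialGraphIso H G} {p : V × W} : p ∈ f.swap.val ↔ p.swap ∈ f.val := by
  simp [swap]

variable (H) in
def definedAtRight (hH : ExtensionProperty H) (v : V) : Order.Cofinal (PartialGraphIso H G) where
  carrier := {f | ∃ w, (w, v) ∈ f.val}
  isCofinal f := by
    obtain ⟨g, ⟨w, hw⟩, hfg⟩ := (definedAtLeft H hH v).isCofinal f.swap
    refine ⟨g.swap, ⟨w, mem_swap.mpr hw⟩, fun p hp => ?_⟩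
    exact mem_swap.mpr (hfg (mem_swap.mpr (by simpa using hp)))

end PartialGraphIso

open PartialGraphIso in
theorem nonempty_iso_of_extensionProperty [Countable W] [Countable V]
    (hH : ExtensionProperty H) (hG : ExtensionProperty G) : Nonempty (H ≃g G) := by
  cases nonempty_encodable W
  cases nonempty_encodable V
  let D : W ⊕ V → Order.Cofinal (PartialGraphIso H G) :=
    Sum.elim (definedAtLeft G hG) (definedAtRight H hH)
  let I := Order.idealOfCofinals default D
  let R (w : W) (v : V) : Prop := ∃ f ∈ I, (w, v) ∈ f.val
  have compat {w w' v v'} (h : R w v) (h' : R w' v') : PairsCompatible H G (w, v) (w', v') := by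
    obtain ⟨f, hf, hwv⟩ := h
    obtain ⟨f', hf', hwv'⟩ := h'
    obtain ⟨g, -, hfg, hf'g⟩ := I.directed _ hf _ hf'
    exact g.prop _ (hfg hwv) _ (hf'g hwv')
  have total (w : W) : ∃ v, R w v := by
    obtain ⟨f, ⟨v, hv⟩, hf⟩ := Order.cofinal_meets_idealOfCofinals default D (Sum.inl w)
    exact ⟨v, f, hf, hv⟩
  have surj (v : V) : ∃ w, R w v := by
    obtain ⟨f, ⟨w, hw⟩, hf⟩ := Order.cofinal_meets_idealOfCofinals default D (Sum.inr v)
    exact ⟨w, f, hf, hw⟩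
  choose φ hφ using total
  choose ψ hψ using surj
  exact ⟨{ toFun := φ
           invFun := ψ
           left_inv w := ((compat (hψ (φ w)) (hφ w)).1.mpr rfl)
           right_inv v := ((compat (hφ (ψ v)) (hψ v)).1.mp rfl)
           map_rel_iff' := (compat (hφ _) (hφ _)).2.symm }⟩

theorem SimpleGraph.Iso.adj_pow_apply_iff_of_semiconj (θ : H ≃g G) {s : H ≃g H} {f : G ≃g G}
    (h : Function.Semiconj θ s f) (n : ℕ) (x : W) :
    G.Adj (θ x) ((f.toEquiv ^ n) (θ x)) ↔ H.Adj x ((s.toEquiv ^ n) x) := by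
  rw [Function.Semiconj.perm_pow_apply (s := s.toEquiv) (f := f.toEquiv) h, θ.map_adj_iff]

theorem fOrbit_infinite_of_semiconj (θ : H ≃g G) {s : H ≃g H} {f : G ≃g G}
    (h : Function.Semiconj θ s f) {x : W} (hx : Function.Injective fun n : ℕ => (s.toEquiv ^ n) x) :
    (fOrbit f (θ x)).Infinite := by
  refine Set.infinite_of_injective_forall_mem (f := fun n : ℕ => (f.toEquiv ^ n) (θ x))
    (fun m n hmn => hx ?_) fun n => ⟨n, by simp⟩
  simpa [Function.Semiconj.perm_pow_apply (s := s.toEquiv) (f := f.toEquiv) h] using hmn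

end Graphs

def columnCode (m : ℕ) : Finset (ℤ × ℕ) := (Encodable.decode m.unpair.1).getD ∅

theorem exists_lt_columnCode_eq (S : Finset (ℤ × ℕ)) (N : ℕ) : ∃ m, N < m ∧ columnCode m = S :=
  ⟨Nat.pair (Encodable.encode S) (N + 1), Nat.right_le_pair _ _, by simp [columnCode]⟩

def shiftRel (p : ℕ → Bool) (x y : ℤ × ℕ) : Prop :=
  (x.2 = y.2 ∧ p (x.1 - y.1).natAbs = false) ∨ (x.2 < y.2 ∧ (x.1 - y.1, x.2) ∈ columnCode y.2)

def shiftGraph (p : ℕ → Bool) : SimpleGraph (ℤ × ℕ) := .fromRel (shiftRel p)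

def shiftAut (p : ℕ → Bool) : shiftGraph p ≃g shiftGraph p where
  toEquiv := (Equiv.addRight (1 : ℤ)).prodCongr (Equiv.refl ℕ)
  map_rel_iff' := by
    simp [shiftGraph, shiftRel, add_sub_add_right_eq_sub, Prod.ext_iff]

theorem shiftAut_pow_apply (p : ℕ → Bool) (n : ℕ) (x : ℤ × ℕ) :
    ((shiftAut p).toEquiv ^ n) x = (x.1 + n, x.2) := by
  induction n with
  | zero => simp
  | succ n ih =>
    rw [pow_succ', Equiv.Perm.mul_apply, ih]
    simp [shiftAut, add_assoc]

theorem shiftAut_pow_injective (p : ℕ → Bool) (x : ℤ × ℕ) :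
    Function.Injective fun n : ℕ => ((shiftAut p).toEquiv ^ n) x := by
  intro m n hmn
  simpa [shiftAut_pow_apply] using hmn

theorem extensionProperty_shiftGraph (p : ℕ → Bool) : ExtensionProperty (shiftGraph p) := by
  intro A B hAB
  classical
  obtain ⟨m, hm, hmA⟩ := exists_lt_columnCode_eq A (((A ∪ B).image Prod.snd).sup id)
  have hlt : ∀ x ∈ A ∪ B, x.2 < m := fun x hx =>
    (Finset.le_sup (f := id) (Finset.mem_image_of_mem Prod.snd hx)).trans_lt hm
  refine ⟨(0, m), fun a ha => ?_, fun b hb => ?_⟩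
  · have ham := hlt a (Finset.mem_union_left _ ha)
    refine (SimpleGraph.fromRel_adj _ _ _).mpr ⟨fun h => ham.ne (congrArg Prod.snd h), ?_⟩
    exact Or.inl (Or.inr ⟨ham, by simpa [hmA] using ha⟩)
  · have hbm := hlt b (Finset.mem_union_right _ hb)
    simp only [shiftGraph, SimpleGraph.fromRel_adj, shiftRel, hmA]
    rintro ⟨-, (⟨h, -⟩ | ⟨-, h⟩) | (⟨h, -⟩ | ⟨h, -⟩)⟩
    · exact hbm.ne h
    · exact Finset.disjoint_left.mp hAB (by simpa using h) hb
    · exact hbm.ne h.symm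
    · exact hbm.not_gt h

theorem shiftGraph_adj_shiftAut_pow_iff (p : ℕ → Bool) (x : ℤ × ℕ) {n : ℕ} (hn : 1 ≤ n) :
    (shiftGraph p).Adj x (((shiftAut p).toEquiv ^ n) x) ↔ p n = false := by
  simp [shiftAut_pow_apply, shiftGraph, shiftRel, Prod.ext_iff, Nat.one_le_iff_ne_zero.mp hn]

theorem continuum_many_classes_general {V : Type*} [Countable V]
    (G : SimpleGraph V) (hG : ExtensionProperty G) :
    ∃ F : (ℕ → Bool) → (G ≃g G),
      (∀ p : ℕ → Bool,
        (∀ v : V, (fOrbit (F p) v).Infinite) ∧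
        (∀ v : V, ∀ n : ℕ, 1 ≤ n →
          (G.Adj v (((F p).toEquiv ^ n) v) ↔ p n = false))) ∧
      (∀ p p' : ℕ → Bool, (∃ n : ℕ, 1 ≤ n ∧ p n ≠ p' n) →
        ¬ ∃ g : G ≃g G, ∀ v : V, g (F p v) = F p' (g v)) := by
  let θ p : shiftGraph p ≃g G :=
    (nonempty_iso_of_extensionProperty (extensionProperty_shiftGraph p) hG).some
  let F p : G ≃g G := (θ p).symm.trans ((shiftAut p).trans (θ p))
  have hF p : Function.Semiconj (θ p) (shiftAut p) (F p) := fun x => by simp [F]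
  have hadj p (v : V) n (hn : 1 ≤ n) : G.Adj v (((F p).toEquiv ^ n) v) ↔ p n = false := by
    rw [← (θ p).apply_symm_apply v, (θ p).adj_pow_apply_iff_of_semiconj (hF p)]
    exact shiftGraph_adj_shiftAut_pow_iff p _ hn
  refine ⟨F, fun p => ⟨fun v => ?_, hadj p⟩, ?_⟩
  · rw [← (θ p).apply_symm_apply v]
    exact fOrbit_infinite_of_semiconj (θ p) (hF p) (shiftAut_pow_injective p _)
  · rintro p p' ⟨n, hn, hne⟩ ⟨g, hg⟩
    obtain ⟨v, -⟩ := hG ∅ ∅ (Finset.disjoint_empty_left _)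
    have key := g.adj_pow_apply_iff_of_semiconj hg n v
    rw [hadj p' _ n hn, hadj p v n hn] at key
    exact hne (by simpa using key.symm)

/-- Continuum many conjugacy classes: for every `p : ℕ∖{0} → 2` there is `f_p ∈ Aut(R)`
with no finite orbits such that `v R f_p^n(v) ⟺ p n = 0` for all `v` and `n ≥ 1`; moreover
`f_p` and `f_{p'}` are not conjugate for `p ≠ p'`. -/
theorem continuum_many_classes {V : Type*} [Countable V] [Infinite V]
    (G : SimpleGraph V) (hG : ExtensionProperty G) :
    ∃ F : (ℕ → Bool) → (G ≃g G),
      (∀ p : ℕ → Bool,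
        (∀ v : V, (fOrbit (F p) v).Infinite) ∧
        (∀ v : V, ∀ n : ℕ, 1 ≤ n →
          (G.Adj v (((F p).toEquiv ^ n) v) ↔ p n = false))) ∧
      (∀ p p' : ℕ → Bool, (∃ n : ℕ, 1 ≤ n ∧ p n ≠ p' n) →
        ¬ ∃ g : G ≃g G, ∀ v : V, g (F p v) = F p' (g v)) :=
  continuum_many_classes_general G hG
end

section
/- Let R be the random graph and f, f' ∈ Aut(R) two automorphisms, each satisfying: (1) infinitely many infinite orbits and no finite orbits; (2) for all finite disjoint A, B ⊆ V there is v ∉ O^f(A∪B) adjacent to every vertex of A and not adjacent to any vertex of O^f(A∪B)∖A; (3) v is never adjacent to f^k(v) for any v and k ∈ ℤ; (4) for all v, w the set {k ∈ ℤ : v adjacent to f^k(w)} is finite; and the analogous conditions for f'. Then f and f' are conjugate in Aut(R). -/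
/-- `O^f(S)`: the union of the `f`-orbits of elements of `S`. -/
def fOrbitSet {V : Type*} {G : SimpleGraph V} (f : G ≃g G) (S : Set V) : Set V :=
  ⋃ a ∈ S, fOrbit f a

/-- Conditions (1)–(4) defining the class `C₀`. -/
def C0Cond {V : Type*} (G : SimpleGraph V) (f : G ≃g G) : Prop :=
  (∀ v : V, (fOrbit f v).Infinite) ∧
  (∀ W : Finset V, ∃ v : V, ∀ w ∈ W, v ∉ fOrbit f w) ∧
  (∀ A B : Finset V, Disjoint A B → ∃ v : V,
    v ∉ fOrbitSet f (↑A ∪ ↑B) ∧ (∀ a ∈ A, G.Adj a v) ∧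
    ∀ y ∈ fOrbitSet f (↑A ∪ ↑B) \ ↑A, ¬ G.Adj y v) ∧
  (∀ v : V, ∀ k : ℤ, ¬ G.Adj v ((f.toEquiv ^ k) v)) ∧
  (∀ v w : V, {k : ℤ | G.Adj v ((f.toEquiv ^ k) w)}.Finite)

/-!
Back and forth on orbits. A finite set `S` of pairs `(x, y)` is extended so that the orbit
pairs `(f^k x, f'^k y)` always form a partial isomorphism. To match a vertex `x` whose
`f`-orbit is new, let `A` collect the `f'^k y₀` with `x ~ f^k x₀` for `(x₀, y₀) ∈ S`;
condition (4) makes `A` finite, and condition (2) yields `y` adjacent to `A` and to nothing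
else in the `f'`-orbits met so far, which is exactly the adjacency pattern of `x`. Condition (3)
and infinite orbits take care of pairs inside the new orbit. Enumerating both sides, the union
of the stages is the graph of an isomorphism that intertwines `f` and `f'`.
-/

open Function Equiv

section BackAndForth

variable {V W : Type*} {G : SimpleGraph V} {H : SimpleGraph W}

namespace Equiv.Perm

lemma zpow_apply_eq_zpow_apply_iff (σ : Perm V) (a b : ℤ) (u v : V) :
    (σ ^ a) u = (σ ^ b) v ↔ u = (σ ^ (b - a)) v := by
  rw [← (σ ^ a).injective.eq_iff (b := (σ ^ (b - a)) v), ← mul_apply, ← zpow_add, add_sub_cancel]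

lemma eq_zpow_apply_iff (σ : Perm V) (k : ℤ) (u v : V) :
    u = (σ ^ k) v ↔ (σ ^ (-k)) u = v := by
  rw [zpow_neg, inv_eq_iff_eq]

end Equiv.Perm

namespace SimpleGraph.Iso

lemma toEquiv_zpow (f : G ≃g G) (k : ℤ) : (f ^ k).toEquiv = f.toEquiv ^ k :=
  map_zpow (MonoidHom.mk' (fun e : G ≃g G => e.toEquiv) fun _ _ => rfl) f k

lemma adj_zpow_apply_iff (f : G ≃g G) (k : ℤ) (x y : V) :
    G.Adj ((f.toEquiv ^ k) x) ((f.toEquiv ^ k) y) ↔ G.Adj x y := by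
  rw [← toEquiv_zpow]
  exact (f ^ k).map_adj_iff

lemma adj_zpow_apply_zpow_apply_iff (f : G ≃g G) (a b : ℤ) (u w : V) :
    G.Adj ((f.toEquiv ^ a) u) ((f.toEquiv ^ b) w) ↔ G.Adj u ((f.toEquiv ^ (b - a)) w) := by
  rw [← f.adj_zpow_apply_iff a u, ← Perm.mul_apply, ← zpow_add, add_sub_cancel]

lemma adj_zpow_apply_comm (f : G ≃g G) (k : ℤ) (u w : V) :
    G.Adj u ((f.toEquiv ^ k) w) ↔ G.Adj w ((f.toEquiv ^ (-k)) u) := by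
  rw [← f.adj_zpow_apply_iff (-k), ← Perm.mul_apply, ← zpow_add, neg_add_cancel, zpow_zero,
    Perm.one_apply, G.adj_comm]

end SimpleGraph.Iso

namespace C0Cond

variable {f : G ≃g G}

lemma zpow_apply_eq_self_iff (hf : C0Cond G f) {v : V} {k : ℤ} :
    (f.toEquiv ^ k) v = v ↔ k = 0 := by
  refine ⟨fun h => by_contra fun hk => hf.1 v ?_, by rintro rfl; rfl⟩
  have hp : (0 : ℤ) < MulAction.period f.toEquiv v := by
    have hdvd := MulAction.zpow_smul_eq_iff_period_dvd.mp ((Perm.smul_def _ v).trans h)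
    have : MulAction.period f.toEquiv v ≠ 0 := by
      rintro h0
      simp [h0, hk] at hdvd
    omega
  refine ((Set.finite_Ico 0 (MulAction.period f.toEquiv v : ℤ)).image
    fun j : ℤ => (f.toEquiv ^ j) v).subset ?_
  rintro _ ⟨j, rfl⟩
  exact ⟨_, ⟨Int.emod_nonneg j hp.ne', Int.emod_lt_of_pos j hp⟩,
    MulAction.zpow_mod_period_smul (g := f.toEquiv) (a := v) j⟩

lemma not_adj_zpow_apply (hf : C0Cond G f) (v : V) (k : ℤ) :
    ¬ G.Adj v ((f.toEquiv ^ k) v) :=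
  hf.2.2.2.1 v k

lemma finite_setOf_adj_zpow_apply (hf : C0Cond G f) (v w : V) :
    {k : ℤ | G.Adj v ((f.toEquiv ^ k) w)}.Finite :=
  hf.2.2.2.2 v w

lemma exists_adj_of_finite (hf : C0Cond G f) {A B : Set V} (hA : A.Finite) (hB : B.Finite)
    (hAB : Disjoint A B) :
    ∃ v, (∀ u ∈ A ∪ B, ∀ k : ℤ, (f.toEquiv ^ k) u ≠ v) ∧ (∀ a ∈ A, G.Adj a v) ∧
      ∀ u ∈ A ∪ B, ∀ k : ℤ, (f.toEquiv ^ k) u ∉ A → ¬ G.Adj ((f.toEquiv ^ k) u) v := by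
  lift A to Finset V using hA
  lift B to Finset V using hB
  obtain ⟨v, hv, hadj, hnadj⟩ := hf.2.2.1 A B (by exact_mod_cast hAB)
  exact ⟨v, fun u hu k hk => hv (Set.mem_biUnion hu ⟨k, hk⟩), hadj,
    fun u hu k hk => hnadj _ ⟨Set.mem_biUnion hu ⟨k, rfl⟩, hk⟩⟩

end C0Cond

def IsPartialIso (G : SimpleGraph V) (H : SimpleGraph W) (R : Set (V × W)) : Prop :=
  ∀ p ∈ R, ∀ q ∈ R, (p.1 = q.1 ↔ p.2 = q.2) ∧ (G.Adj p.1 q.1 ↔ H.Adj p.2 q.2)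

namespace IsPartialIso

lemma swap {R : Set (V × W)} (h : IsPartialIso G H R) : IsPartialIso H G (Prod.swap ⁻¹' R) :=
  fun _ hp _ hq => ⟨(h _ hp _ hq).1.symm, (h _ hp _ hq).2.symm⟩

lemma iUnion {ι : Type*} {R : ι → Set (V × W)} (hdir : Directed (· ⊆ ·) R)
    (h : ∀ i, IsPartialIso G H (R i)) : IsPartialIso G H (⋃ i, R i) := by
  intro p hp q hq
  obtain ⟨i, hp⟩ := Set.mem_iUnion.mp hp
  obtain ⟨j, hq⟩ := Set.mem_iUnion.mp hq
  obtain ⟨k, hik, hjk⟩ := hdir i j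
  exact h k p (hik hp) q (hjk hq)

lemma exists_iso {R : Set (V × W)} (h : IsPartialIso G H R) (htot : ∀ x, ∃ y, (x, y) ∈ R)
    (hsurj : ∀ y, ∃ x, (x, y) ∈ R) : ∃ g : G ≃g H, ∀ x, (x, g x) ∈ R := by
  choose g hg using htot
  have hbij : Bijective g := by
    refine ⟨fun a b hab => (h _ (hg a) _ (hg b)).1.mpr hab, fun y => ?_⟩
    obtain ⟨x, hx⟩ := hsurj y
    exact ⟨x, (h _ (hg x) _ hx).1.mp rfl⟩
  exact ⟨⟨Equiv.ofBijective g hbij, fun {a b} => (h _ (hg a) _ (hg b)).2.symm⟩, hg⟩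

end IsPartialIso

def orbitPairs (f : G ≃g G) (f' : H ≃g H) (S : Set (V × W)) : Set (V × W) :=
  {p | ∃ q ∈ S, ∃ k : ℤ, ((f.toEquiv ^ k) q.1, (f'.toEquiv ^ k) q.2) = p}

section orbitPairs

variable {f : G ≃g G} {f' : H ≃g H} {S : Set (V × W)}

lemma subset_orbitPairs : S ⊆ orbitPairs f f' S :=
  fun q hq => ⟨q, hq, 0, rfl⟩

lemma orbitPairs_mono : Monotone (orbitPairs f f') :=
  fun _ _ hST _ ⟨q, hq, k, hk⟩ => ⟨q, hST hq, k, hk⟩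

lemma zpow_mem_orbitPairs {p : V × W} (hp : p ∈ orbitPairs f f' S) (k : ℤ) :
    ((f.toEquiv ^ k) p.1, (f'.toEquiv ^ k) p.2) ∈ orbitPairs f f' S := by
  obtain ⟨q, hq, j, rfl⟩ := hp
  exact ⟨q, hq, k + j, by simp only [zpow_add, Perm.mul_apply]⟩

lemma apply_mem_orbitPairs {p : V × W} (hp : p ∈ orbitPairs f f' S) :
    (f p.1, f' p.2) ∈ orbitPairs f f' S := by
  simpa using zpow_mem_orbitPairs hp 1

lemma orbitPairs_insert_of_mem {p : V × W} (hp : p ∈ orbitPairs f f' S) :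
    orbitPairs f f' (insert p S) = orbitPairs f f' S := by
  refine (orbitPairs_mono (Set.subset_insert p S)).antisymm' ?_
  rintro _ ⟨q, rfl | hq, k, rfl⟩
  · exact zpow_mem_orbitPairs hp k
  · exact ⟨q, hq, k, rfl⟩

lemma orbitPairs_swap : orbitPairs f' f (Prod.swap ⁻¹' S) = Prod.swap ⁻¹' orbitPairs f f' S := by
  ext p
  constructor
  · rintro ⟨q, hq, k, rfl⟩
    exact ⟨q.swap, hq, k, rfl⟩
  · rintro ⟨q, hq, k, hk⟩
    exact ⟨q.swap, by simpa using hq, k, by rw [← Prod.swap_swap p, ← hk]; rfl⟩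

lemma isPartialIso_orbitPairs_of_forall
    (h : ∀ p ∈ S, ∀ q ∈ S, ∀ k : ℤ,
      (p.1 = (f.toEquiv ^ k) q.1 ↔ p.2 = (f'.toEquiv ^ k) q.2) ∧
      (G.Adj p.1 ((f.toEquiv ^ k) q.1) ↔ H.Adj p.2 ((f'.toEquiv ^ k) q.2))) :
    IsPartialIso G H (orbitPairs f f' S) := by
  rintro _ ⟨p, hp, a, rfl⟩ _ ⟨q, hq, b, rfl⟩
  simp only [Perm.zpow_apply_eq_zpow_apply_iff, SimpleGraph.Iso.adj_zpow_apply_zpow_apply_iff]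
  exact h p hp q hq (b - a)

lemma isPartialIso_orbitPairs_insert (hf : C0Cond G f) (hf' : C0Cond H f')
    (hS : IsPartialIso G H (orbitPairs f f' S)) {x : V} {y : W}
    (hx : ∀ q ∈ S, ∀ k : ℤ, (f.toEquiv ^ k) q.1 ≠ x)
    (hy : ∀ q ∈ S, ∀ k : ℤ, (f'.toEquiv ^ k) q.2 ≠ y)
    (hxy : ∀ q ∈ S, ∀ k : ℤ, G.Adj x ((f.toEquiv ^ k) q.1) ↔ H.Adj y ((f'.toEquiv ^ k) q.2)) :
    IsPartialIso G H (orbitPairs f f' (insert (x, y) S)) := by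
  refine isPartialIso_orbitPairs_of_forall ?_
  rintro p (rfl | hp) q (rfl | hq) k
  · dsimp only
    rw [eq_comm, hf.zpow_apply_eq_self_iff, eq_comm (a := y), hf'.zpow_apply_eq_self_iff]
    exact ⟨Iff.rfl, iff_of_false (hf.not_adj_zpow_apply x k) (hf'.not_adj_zpow_apply y k)⟩
  · exact ⟨iff_of_false (hx q hq k).symm (hy q hq k).symm, hxy q hq k⟩
  · rw [Perm.eq_zpow_apply_iff, Perm.eq_zpow_apply_iff, f.adj_zpow_apply_comm,
      f'.adj_zpow_apply_comm]
    exact ⟨iff_of_false (hx p hp _) (hy p hp _), hxy p hp _⟩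
  · exact hS _ (subset_orbitPairs hp) _ (zpow_mem_orbitPairs (subset_orbitPairs hq) k)

lemma exists_adj_zpow_apply_iff (hf : C0Cond G f) (hf' : C0Cond H f') (hSfin : S.Finite)
    (hS : IsPartialIso G H (orbitPairs f f' S)) (x : V) :
    ∃ y, (∀ q ∈ S, ∀ k : ℤ, (f'.toEquiv ^ k) q.2 ≠ y) ∧
      ∀ q ∈ S, ∀ k : ℤ, G.Adj x ((f.toEquiv ^ k) q.1) ↔ H.Adj y ((f'.toEquiv ^ k) q.2) := by
  set A : Set W := ⋃ q ∈ S,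
    (fun k : ℤ => (f'.toEquiv ^ k) q.2) '' {k | G.Adj x ((f.toEquiv ^ k) q.1)}
  have hA : A.Finite := hSfin.biUnion fun q _ => (hf.finite_setOf_adj_zpow_apply x q.1).image _
  have hmemA : ∀ w, w ∈ A ↔ ∃ q ∈ S, ∃ k : ℤ,
      G.Adj x ((f.toEquiv ^ k) q.1) ∧ (f'.toEquiv ^ k) q.2 = w := by
    simp [A]
  obtain ⟨y, hy, hyA, hy_notA⟩ := hf'.exists_adj_of_finite hA
    (hSfin.image Prod.snd).sdiff Set.disjoint_sdiff_right
  have hS_snd : ∀ q ∈ S, q.2 ∈ A ∪ (Prod.snd '' S \ A) := fun q hq => by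
    rw [Set.union_sdiff_self]
    exact Or.inr ⟨q, hq, rfl⟩
  refine ⟨y, fun q hq k => hy q.2 (hS_snd q hq) k, fun q hq k => ⟨fun hadj => ?_, fun hadj => ?_⟩⟩
  · exact (hyA _ ((hmemA _).mpr ⟨q, hq, k, hadj, rfl⟩)).symm
  · have hqA : (f'.toEquiv ^ k) q.2 ∈ A := by
      by_contra hqA
      exact hy_notA q.2 (hS_snd q hq) k hqA hadj.symm
    obtain ⟨r, hr, j, hxr, hrq⟩ := (hmemA _).mp hqA
    have hrq' : (f.toEquiv ^ j) r.1 = (f.toEquiv ^ k) q.1 :=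
      (hS _ (zpow_mem_orbitPairs (subset_orbitPairs hr) j)
        _ (zpow_mem_orbitPairs (subset_orbitPairs hq) k)).1.mpr hrq
    rwa [← hrq']

lemma exists_isPartialIso_orbitPairs_insert_fst (hf : C0Cond G f) (hf' : C0Cond H f')
    (hSfin : S.Finite) (hS : IsPartialIso G H (orbitPairs f f' S)) (x : V) :
    ∃ y, IsPartialIso G H (orbitPairs f f' (insert (x, y) S)) := by
  by_cases hx : ∃ y, (x, y) ∈ orbitPairs f f' S
  · obtain ⟨y, hy⟩ := hx
    exact ⟨y, by rwa [orbitPairs_insert_of_mem hy]⟩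
  · obtain ⟨y, hy, hxy⟩ := exists_adj_zpow_apply_iff hf hf' hSfin hS x
    refine ⟨y, isPartialIso_orbitPairs_insert hf hf' hS (fun q hq k hk => ?_) hy hxy⟩
    exact hx ⟨_, q, hq, k, by rw [hk]⟩

lemma exists_isPartialIso_orbitPairs_insert_snd (hf : C0Cond G f) (hf' : C0Cond H f')
    (hSfin : S.Finite) (hS : IsPartialIso G H (orbitPairs f f' S)) (y : W) :
    ∃ x, IsPartialIso G H (orbitPairs f f' (insert (x, y) S)) := by
  obtain ⟨x, hx⟩ := exists_isPartialIso_orbitPairs_insert_fst hf' hf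
    (hSfin.preimage Prod.swap_injective.injOn) (by rw [orbitPairs_swap]; exact hS.swap) y
  have hins : insert (y, x) (Prod.swap ⁻¹' S) = Prod.swap ⁻¹' insert (x, y) S := by
    ext ⟨a, b⟩
    simp [and_comm]
  rw [hins, orbitPairs_swap] at hx
  exact ⟨x, by simpa [Set.preimage_preimage] using hx.swap⟩

lemma exists_isPartialIso_orbitPairs_extend (hf : C0Cond G f) (hf' : C0Cond H f')
    (hSfin : S.Finite) (hS : IsPartialIso G H (orbitPairs f f' S)) (x : V) (y : W) :
    ∃ T, (T.Finite ∧ IsPartialIso G H (orbitPairs f f' T)) ∧ S ⊆ T ∧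
      (∃ y', (x, y') ∈ T) ∧ ∃ x', (x', y) ∈ T := by
  obtain ⟨y', h⟩ := exists_isPartialIso_orbitPairs_insert_fst hf hf' hSfin hS x
  obtain ⟨x', h'⟩ := exists_isPartialIso_orbitPairs_insert_snd hf hf' (hSfin.insert _) h y
  exact ⟨_, ⟨(hSfin.insert _).insert _, h'⟩, (Set.subset_insert _ _).trans (Set.subset_insert _ _),
    ⟨y', Set.mem_insert_of_mem _ (Set.mem_insert _ _)⟩, ⟨x', Set.mem_insert _ _⟩⟩

end orbitPairs

lemma exists_monotone_seq_of_back_and_forth {α β : Type*} [Countable α] [Countable β]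
    [Nonempty α] [Nonempty β] (P : Set (α × β) → Prop) (h0 : P ∅)
    (hext : ∀ S, P S → ∀ x y, ∃ T, P T ∧ S ⊆ T ∧ (∃ y', (x, y') ∈ T) ∧ ∃ x', (x', y) ∈ T) :
    ∃ S : ℕ → Set (α × β), Monotone S ∧ (∀ n, P (S n)) ∧
      (∀ x, ∃ n y, (x, y) ∈ S n) ∧ ∀ y, ∃ n x, (x, y) ∈ S n := by
  obtain ⟨e, he⟩ := exists_surjective_nat α
  obtain ⟨e', he'⟩ := exists_surjective_nat β
  choose! step hP hsub hleft hright using hext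
  let S : ℕ → Set (α × β) := fun n => Nat.rec ∅ (fun n T => step T (e n) (e' n)) n
  have hS : ∀ n, P (S n) := fun n => Nat.rec h0 (fun n ih => hP _ ih _ _) n
  refine ⟨S, monotone_nat_of_le_succ fun n => hsub _ (hS n) _ _, hS, fun x => ?_, fun y => ?_⟩
  · obtain ⟨n, rfl⟩ := he x
    exact ⟨n + 1, hleft _ (hS n) _ _⟩
  · obtain ⟨n, rfl⟩ := he' y
    exact ⟨n + 1, hright _ (hS n) _ _⟩

end BackAndForth

theorem c0_is_one_class_general {V : Type*} [Countable V] [Infinite V]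
    (G : SimpleGraph V)
    (f f' : G ≃g G) (hf : C0Cond G f) (hf' : C0Cond G f') :
    ∃ g : G ≃g G, ∀ v : V, g (f v) = f' (g v) := by
  obtain ⟨S, hmono, hS, hleft, hright⟩ := exists_monotone_seq_of_back_and_forth
    (fun S => S.Finite ∧ IsPartialIso G G (orbitPairs f f' S))
    ⟨Set.finite_empty, fun p hp => by simp [orbitPairs] at hp⟩
    fun S hS => exists_isPartialIso_orbitPairs_extend hf hf' hS.1 hS.2
  set R := ⋃ n, orbitPairs f f' (S n)
  have hR : IsPartialIso G G R :=
    IsPartialIso.iUnion (orbitPairs_mono.comp hmono).directed_le fun n => (hS n).2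
  obtain ⟨g, hg⟩ := hR.exists_iso
    (fun x => let ⟨n, y, h⟩ := hleft x; ⟨y, Set.mem_iUnion.mpr ⟨n, subset_orbitPairs h⟩⟩)
    (fun y => let ⟨n, x, h⟩ := hright y; ⟨x, Set.mem_iUnion.mpr ⟨n, subset_orbitPairs h⟩⟩)
  refine ⟨g, fun v => ?_⟩
  obtain ⟨n, hn⟩ := Set.mem_iUnion.mp (hg v)
  exact (hR _ (hg (f v)) _ (Set.mem_iUnion.mpr ⟨n, apply_mem_orbitPairs hn⟩)).1.mp rfl

/-- Any two automorphisms of the random graph satisfying conditions (1)–(4) are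
conjugate in `Aut(R)`. -/
theorem c0_is_one_class {V : Type*} [Countable V] [Infinite V]
    (G : SimpleGraph V) (hG : ExtensionProperty G)
    (f f' : G ≃g G) (hf : C0Cond G f) (hf' : C0Cond G f') :
    ∃ g : G ≃g G, ∀ v : V, g (f v) = f' (g v) :=
  c0_is_one_class_general G f f' hf hf'
end

section
/- Let R be the random graph, f ∈ Aut(R), and suppose that for some finite disjoint sets A, B ⊆ V, every vertex v which is adjacent to all of A and to none of B lies in O^f(A∪B). Then, setting F = A ∪ B, the set U = {v : v adjacent to all of A, to none of B} is infinite, the pointwise stabilizer Aut(R)_(F) acts transitively on U ∖ F, and for every v ∈ U ∖ F the orbit Aut(R)_(F)(v) is an infinite set covered by finitely many f-orbits. -/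
/-!
A countable graph with the extension property is ultrahomogeneous: the extension property says
precisely that a finite partial isomorphism extends to any further vertex, and the back-and-forth
argument (`isUltrahomogeneous_iff_IsExtensionPair`, for `G` as a structure in the language of
graphs) then extends every finite partial isomorphism to an automorphism. Two vertices of `U \ F`
have the same adjacency to `F`, so some automorphism fixing `F` maps one to the other; hence the
orbit of `v` contains the infinite set `U \ F`. Conversely an automorphism fixing `F` maps `U` into
itself, so the orbit lies in `U ⊆ O^f(F)`.
-/

open FirstOrder Language Structure Function Set

namespace FirstOrder.Language.graph

variable {M N : Type*} [Language.graph.Structure M] [Language.graph.Structure N]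

omit [Language.graph.Structure M] in
lemma relMap_adj_comp (φ : M → N) (x : Fin 2 → M) :
    RelMap adj (φ ∘ x) = RelMap adj ![φ (x 0), φ (x 1)] :=
  congrArg _ (FinVec.etaExpand_eq (φ ∘ x)).symm

lemma Embedding.relMap_adj_iff (φ : M ↪[Language.graph] N) (x y : M) :
    RelMap adj ![φ x, φ y] ↔ RelMap adj ![x, y] := by
  have h := φ.map_rel adj ![x, y]
  rwa [relMap_adj_comp] at h

def Substructure.embeddingOfInjOn (T : Language.graph.Substructure M) (φ : M → N)
    (hinj : InjOn φ T) (hadj : ∀ x ∈ T, ∀ y ∈ T, RelMap adj ![φ x, φ y] ↔ RelMap adj ![x, y]) :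
    T ↪[Language.graph] N where
  toFun x := φ x
  inj' x y h := Subtype.ext (hinj x.2 y.2 h)
  map_fun' f := isEmptyElim f
  map_rel' := by
    rintro _ ⟨⟩ x
    change RelMap adj (φ ∘ Subtype.val ∘ x) ↔ RelMap adj (Subtype.val ∘ x)
    rw [relMap_adj_comp, relMap_adj_comp]
    exact hadj _ (x 0).2 _ (x 1).2

end FirstOrder.Language.graph

namespace SimpleGraph

variable {V : Type*} (G : SimpleGraph V)

def IsPartialIso (s : Set V) (φ : V → V) : Prop :=
  InjOn φ s ∧ ∀ x ∈ s, ∀ y ∈ s, G.Adj (φ x) (φ y) ↔ G.Adj x y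

variable {G} {s : Set V} {φ ψ : V → V}

lemma IsPartialIso.congr (hφ : G.IsPartialIso s φ) (h : EqOn φ ψ s) : G.IsPartialIso s ψ :=
  ⟨hφ.1.congr h, fun x hx y hy => h hx ▸ h hy ▸ hφ.2 x hx y hy⟩

lemma IsPartialIso.insert (hφ : G.IsPartialIso s φ) {m : V} (hm : m ∉ s) (hφm : φ m ∉ φ '' s)
    (hadj : ∀ x ∈ s, G.Adj (φ x) (φ m) ↔ G.Adj x m) : G.IsPartialIso (insert m s) φ := by
  refine ⟨(injOn_insert hm).2 ⟨hφ.1, hφm⟩, ?_⟩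
  rintro x (rfl | hx) y (rfl | hy)
  · simp
  · rw [G.adj_comm, G.adj_comm x]; exact hadj y hy
  · exact hadj x hx
  · exact hφ.2 x hx y hy

lemma isPartialIso_update_id [DecidableEq V] {F : Set V} {v w : V} (hv : v ∉ F) (hw : w ∉ F)
    (hvw : ∀ x ∈ F, G.Adj x v ↔ G.Adj x w) : G.IsPartialIso (insert v F) (update id v w) := by
  have hid : G.IsPartialIso F (update id v w) :=
    IsPartialIso.congr (φ := id) ⟨injOn_id F, fun _ _ _ _ => Iff.rfl⟩
      fun x hx => (update_of_ne (ne_of_mem_of_not_mem hx hv) _ _).symm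
  refine hid.insert hv ?_ fun x hx => ?_
  · rintro ⟨x, hx, hxw⟩
    rw [update_self, update_of_ne (ne_of_mem_of_not_mem hx hv)] at hxw
    exact hw (hxw ▸ hx)
  · rw [update_self, update_of_ne (ne_of_mem_of_not_mem hx hv)]
    exact (hvw x hx).symm

end SimpleGraph

namespace ExtensionProperty

open SimpleGraph

variable {V : Type*} {G : SimpleGraph V}

theorem exists_notMem (hG : ExtensionProperty G) {A B : Finset V} (hAB : Disjoint A B)
    (T : Finset V) : ∃ v ∉ T, (∀ a ∈ A, G.Adj a v) ∧ ∀ b ∈ B, ¬ G.Adj b v := by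
  classical
  -- a witness `w` adjacent to all of `T` rules out `T` once we ask `v` to avoid `w`
  obtain ⟨w, hw, -⟩ := hG (A ∪ B ∪ T) ∅ (Finset.disjoint_empty_right _)
  have hwA : w ∉ A := fun h => G.irrefl (hw w (by simp [h]))
  obtain ⟨v, hvA, hvB⟩ := hG A (insert w B) (Finset.disjoint_insert_right.2 ⟨hwA, hAB⟩)
  refine ⟨v, fun hvT => ?_, hvA, fun b hb => hvB b (Finset.mem_insert_of_mem hb)⟩
  exact hvB w (Finset.mem_insert_self _ _) (hw v (by simp [hvT])).symm

theorem infinite_setOf (hG : ExtensionProperty G) {A B : Finset V} (hAB : Disjoint A B) :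
    {v | (∀ a ∈ A, G.Adj a v) ∧ ∀ b ∈ B, ¬ G.Adj b v}.Infinite := fun hfin => by
  obtain ⟨v, hv, hvU⟩ := hG.exists_notMem hAB hfin.toFinset
  exact hv (hfin.mem_toFinset.2 hvU)

theorem exists_isPartialIso_insert (hG : ExtensionProperty G) {s : Set V} {φ : V → V}
    (hs : s.Finite) (hφ : G.IsPartialIso s φ) (m : V) :
    ∃ ψ, EqOn ψ φ s ∧ G.IsPartialIso (insert m s) ψ := by
  classical
  by_cases hm : m ∈ s
  · exact ⟨φ, eqOn_refl _ _, by rwa [insert_eq_of_mem hm]⟩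
  set A := (hs.toFinset.filter (G.Adj · m)).image φ
  set B := (hs.toFinset.filter (¬ G.Adj · m)).image φ
  have hAB : Disjoint A B := by
    simp only [A, B, Finset.disjoint_left, Finset.mem_image, Finset.mem_filter, hs.mem_toFinset]
    rintro _ ⟨x, ⟨hx, hxm⟩, rfl⟩ ⟨y, ⟨hy, hym⟩, hyx⟩
    exact hym (hφ.1 hy hx hyx ▸ hxm)
  obtain ⟨n, hn, hnA, hnB⟩ := hG.exists_notMem hAB (hs.toFinset.image φ)
  have heq : EqOn (update φ m n) φ s := fun x hx => update_of_ne (ne_of_mem_of_not_mem hx hm) _ _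
  refine ⟨update φ m n, heq, (hφ.congr heq.symm).insert hm ?_ fun x hx => ?_⟩
  · rw [update_self, heq.image_eq]
    simpa using hn
  · rw [heq hx, update_self]
    have hxs : x ∈ hs.toFinset := hs.mem_toFinset.2 hx
    by_cases hxm : G.Adj x m
    · exact iff_of_true (hnA _ (Finset.mem_image_of_mem φ (Finset.mem_filter.2 ⟨hxs, hxm⟩))) hxm
    · exact iff_of_false (hnB _ (Finset.mem_image_of_mem φ (Finset.mem_filter.2 ⟨hxs, hxm⟩))) hxm

theorem isExtensionPair (hG : ExtensionProperty G) :
    letI := G.structure; Language.graph.IsExtensionPair V V := by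
  let := G.structure
  classical
  rw [isExtensionPair_iff_exists_embedding_closure_singleton_sup]
  intro S hS f m
  let φ : V → V := fun x => if h : x ∈ S then f ⟨x, h⟩ else x
  have hφS : ∀ x (hx : x ∈ S), φ x = f ⟨x, hx⟩ := fun x hx => dif_pos hx
  have hφ : G.IsPartialIso S φ := by
    refine ⟨fun x hx y hy hxy => ?_, fun x hx y hy => ?_⟩
    · rw [hφS x hx, hφS y hy] at hxy
      exact congrArg Subtype.val (f.injective hxy)
    · rw [hφS x hx, hφS y hy]
      exact graph.Embedding.relMap_adj_iff f ⟨x, hx⟩ ⟨y, hy⟩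
  have hSfin : (S : Set V).Finite := finite_coe_iff.1 (Substructure.fg_iff_finite.1 hS)
  obtain ⟨ψ, hψφ, hψ⟩ := hG.exists_isPartialIso_insert hSfin hφ m
  have hcarrier : ((Substructure.closure Language.graph {m} ⊔ S : Language.graph.Substructure V) :
      Set V) = insert m (S : Set V) := by
    rw [← Substructure.closure_eq S, ← Substructure.closure_union]; simp
  rw [← hcarrier] at hψ
  refine ⟨graph.Substructure.embeddingOfInjOn _ ψ hψ.1 hψ.2, ?_⟩
  ext x
  exact ((hψφ x.2).trans (hφS x x.2)).symm

theorem exists_iso_eqOn [Countable V] (hG : ExtensionProperty G) {s : Set V} {φ : V → V}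
    (hs : s.Finite) (hφ : G.IsPartialIso s φ) : ∃ g : G ≃g G, EqOn g φ s := by
  let := G.structure
  have hU : Language.graph.IsUltrahomogeneous V :=
    (isUltrahomogeneous_iff_IsExtensionPair Structure.cg_of_countable).2 hG.isExtensionPair
  let S := Substructure.closure Language.graph s
  have hS : (S : Set V) = s := Substructure.closure_eq_of_isRelational _ s
  rw [← hS] at hs hφ
  obtain ⟨g, hg⟩ := hU S (Substructure.fg_iff_finite.2 hs.to_subtype)
    (graph.Substructure.embeddingOfInjOn S φ hφ.1 hφ.2)
  refine ⟨⟨g.toEquiv, fun {x y} => graph.Embedding.relMap_adj_iff g.toEmbedding x y⟩,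
    fun x hx => ?_⟩
  exact (congrArg (· ⟨x, Substructure.subset_closure hx⟩) hg).symm

theorem exists_iso_fixing_apply_eq [Countable V] (hG : ExtensionProperty G)
    {F : Set V} (hF : F.Finite) {v w : V} (hv : v ∉ F) (hw : w ∉ F)
    (hvw : ∀ x ∈ F, G.Adj x v ↔ G.Adj x w) : ∃ g : G ≃g G, (∀ x ∈ F, g x = x) ∧ g v = w := by
  classical
  obtain ⟨g, hg⟩ := hG.exists_iso_eqOn (hF.insert v) (isPartialIso_update_id hv hw hvw)
  refine ⟨g, fun x hx => ?_, ?_⟩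
  · rw [hg (mem_insert_of_mem v hx), update_of_ne (ne_of_mem_of_not_mem hx hv), id]
  · rw [hg (mem_insert v F), update_self]

end ExtensionProperty

lemma SimpleGraph.Iso.adj_apply_iff_of_apply_eq {V : Type*} {G : SimpleGraph V} (g : G ≃g G)
    {a : V} (ha : g a = a) (v : V) : G.Adj a (g v) ↔ G.Adj a v := by
  conv_lhs => rw [← ha]
  exact g.map_adj_iff

theorem stabilizer_orbit_covered_general {V : Type*} [Countable V]
    (G : SimpleGraph V) (hG : ExtensionProperty G)
    (f : G ≃g G) (A B : Finset V) (hAB : Disjoint A B)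
    (hcov : ∀ v : V, (∀ a ∈ A, G.Adj a v) → (∀ b ∈ B, ¬ G.Adj b v) →
      v ∈ fOrbitSet f (↑A ∪ ↑B)) :
    let U : Set V := {v : V | (∀ a ∈ A, G.Adj a v) ∧ ∀ b ∈ B, ¬ G.Adj b v}
    let F : Set V := ↑A ∪ ↑B
    U.Infinite ∧
    (∀ v ∈ U \ F, ∀ w ∈ U \ F,
      ∃ g : G ≃g G, (∀ x ∈ F, g x = x) ∧ g v = w) ∧
    (∀ v ∈ U \ F,
      {w : V | ∃ g : G ≃g G, (∀ x ∈ F, g x = x) ∧ g v = w}.Infinite ∧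
      ∃ S : Finset V,
        {w : V | ∃ g : G ≃g G, (∀ x ∈ F, g x = x) ∧ g v = w} ⊆ fOrbitSet f ↑S) := by
  classical
  intro U F
  have hF : F.Finite := A.finite_toSet.union B.finite_toSet
  have htrans : ∀ v ∈ U \ F, ∀ w ∈ U \ F, ∃ g : G ≃g G, (∀ x ∈ F, g x = x) ∧ g v = w := by
    rintro v ⟨hvU, hvF⟩ w ⟨hwU, hwF⟩
    refine hG.exists_iso_fixing_apply_eq hF hvF hwF ?_
    rintro x (hx | hx)
    · exact iff_of_true (hvU.1 x hx) (hwU.1 x hx)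
    · exact iff_of_false (hvU.2 x hx) (hwU.2 x hx)
  refine ⟨hG.infinite_setOf hAB, htrans, fun v hv => ⟨?_, A ∪ B, ?_⟩⟩
  · exact ((hG.infinite_setOf hAB).sdiff hF).mono fun w hw => htrans v hv w hw
  · rintro _ ⟨g, hgF, rfl⟩
    rw [Finset.coe_union]
    refine hcov (g v) (fun a ha => ?_) fun b hb => ?_
    · exact (g.adj_apply_iff_of_apply_eq (hgF a (Or.inl ha)) v).2 (hv.1.1 a ha)
    · exact (g.adj_apply_iff_of_apply_eq (hgF b (Or.inr hb)) v).not.2 (hv.1.2 b hb)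

/-- If every vertex adjacent to all of `A` and to nothing in `B` lies in `O^f(A ∪ B)`,
then with `F = A ∪ B` and `U` the set of such vertices: `U` is infinite, the pointwise
stabilizer of `F` acts transitively on `U \ F`, and for `v ∈ U \ F` its stabilizer orbit
is an infinite set covered by finitely many `f`-orbits. -/
theorem stabilizer_orbit_covered {V : Type*} [Countable V] [Infinite V]
    (G : SimpleGraph V) (hG : ExtensionProperty G)
    (f : G ≃g G) (A B : Finset V) (hAB : Disjoint A B)
    (hcov : ∀ v : V, (∀ a ∈ A, G.Adj a v) → (∀ b ∈ B, ¬ G.Adj b v) →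
      v ∈ fOrbitSet f (↑A ∪ ↑B)) :
    let U : Set V := {v : V | (∀ a ∈ A, G.Adj a v) ∧ ∀ b ∈ B, ¬ G.Adj b v}
    let F : Set V := ↑A ∪ ↑B
    U.Infinite ∧
    (∀ v ∈ U \ F, ∀ w ∈ U \ F,
      ∃ g : G ≃g G, (∀ x ∈ F, g x = x) ∧ g v = w) ∧
    (∀ v ∈ U \ F,
      {w : V | ∃ g : G ≃g G, (∀ x ∈ F, g x = x) ∧ g v = w}.Infinite ∧
      ∃ S : Finset V,
        {w : V | ∃ g : G ≃g G, (∀ x ∈ F, g x = x) ∧ g v = w} ⊆ fOrbitSet f ↑S) :=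
  stabilizer_orbit_covered_general G hG f A B hAB hcov
end

section
/- Let R be the random graph and let K ⊆ Aut(R) be compact. Define the graph E on V by x E y iff there exists h ∈ K with h(x) = y or h⁻¹(x) = y, and let d_K(x,y) be the E-graph distance (∞ if no path). Then d_K is an extended metric on V, and for every finite set M ⊆ V, every τ : M → 2, and every r ∈ ℕ, there exists a vertex v realizing τ with d_K(v, M) > r. -/
/-- The graph `E` on `V` associated to `K ⊆ Aut(R)`: `x E y` iff some `h ∈ K` has
`h x = y` or `h⁻¹ x = y`. -/
def kGraph {V : Type*} (G : SimpleGraph V) (K : Set (G ≃g G)) : SimpleGraph V :=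
  SimpleGraph.fromRel (fun x y => ∃ h ∈ K, h x = y ∨ h.symm x = y)

/-!
Compactness of `K` in the pointwise convergence topology makes the orbit maps `h ↦ h x` and
`h ↦ h⁻¹ x` have finite image, so `E` is locally finite and every `d_K`-ball of finite radius
around the finite set `M` is finite. The extension property then yields a vertex `u` adjacent
to the whole ball, and a vertex `v` realizing `τ` but not adjacent to `u`; such a `v` lies
outside the ball.
-/

open SimpleGraph

theorem kGraph_neighborSet_finite {V : Type*} (G : SimpleGraph V)
    (K : Set (G ≃g G)) (hK : @IsCompact _ (autTopology G) K) (x : V) :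
    ((kGraph G K).neighborSet x).Finite := by
  let : TopologicalSpace V := ⊥
  have : DiscreteTopology V := ⟨rfl⟩
  let : TopologicalSpace (G ≃g G) := autTopology G
  have hcont : Continuous (fun f : G ≃g G => ((f : V → V), (f.symm : V → V))) :=
    continuous_induced_dom
  have hfwd : ((fun h : G ≃g G => h x) '' K).Finite :=
    (hK.image (((continuous_apply x).comp continuous_fst).comp hcont)).finite_of_discrete
  have hbwd : ((fun h : G ≃g G => h.symm x) '' K).Finite :=
    (hK.image (((continuous_apply x).comp continuous_snd).comp hcont)).finite_of_discrete
  refine (hfwd.union hbwd).subset ?_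
  rintro y hy
  rw [mem_neighborSet, kGraph, fromRel_adj] at hy
  obtain ⟨-, ⟨h, hKh, rfl | rfl⟩ | ⟨h, hKh, rfl | rfl⟩⟩ := hy
  · exact Or.inl ⟨h, hKh, rfl⟩
  · exact Or.inr ⟨h, hKh, rfl⟩
  · exact Or.inr ⟨h, hKh, by simp⟩
  · exact Or.inl ⟨h, hKh, by simp⟩

theorem SimpleGraph.finite_ball {V : Type*} {G : SimpleGraph V}
    (hG : ∀ x : V, (G.neighborSet x).Finite) (c : V) (n : ℕ) : (G.ball c n).Finite := by
  induction n with
  | zero => simp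
  | succ n ih =>
    refine ((ih.biUnion fun u _ => hG u).insert c).subset ?_
    intro v hv
    have hne : G.edist v c ≠ ⊤ := ne_top_of_lt hv
    obtain ⟨p, hp⟩ := exists_walk_of_edist_ne_top hne
    cases p with
    | nil => exact Set.mem_insert _ _
    | @cons _ u _ hadj q =>
      have hq : G.edist u c < n := by
        refine (edist_le q).trans_lt ?_
        rw [mem_ball, ← hp, Walk.length_cons] at hv
        have : q.length + 1 < n + 1 := by exact_mod_cast hv
        exact_mod_cast Nat.lt_of_add_lt_add_right this
      exact Set.mem_insert_of_mem _ (Set.mem_biUnion hq hadj.symm)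

theorem ExtensionProperty.exists_realizes_notMem {V : Type*} {G : SimpleGraph V}
    (hG : ExtensionProperty G) (M F : Finset V) (τ : V → Bool) :
    ∃ v : V, Realizes G M τ v ∧ v ∉ F := by
  classical
  obtain ⟨u, hu, -⟩ := hG (F ∪ M) ∅ (Finset.disjoint_empty_right _)
  have huM : u ∉ M := fun h => G.loopless.irrefl u (hu u (Finset.mem_union_right F h))
  have hdisj : Disjoint (M.filter (τ · = true)) (insert u (M.filter (¬ τ · = true))) := by
    rw [Finset.disjoint_insert_right]
    exact ⟨fun h => huM (Finset.mem_filter.mp h).1, Finset.disjoint_filter_filter_not _ _ _⟩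
  obtain ⟨v, hvtrue, hvfalse⟩ := hG _ _ hdisj
  refine ⟨v, fun w hw => ?_, fun hvF => ?_⟩
  · by_cases hτ : τ w = true
    · exact iff_of_true (hvtrue w (Finset.mem_filter.mpr ⟨hw, hτ⟩)) hτ
    · exact iff_of_false
        (hvfalse w (Finset.mem_insert_of_mem (Finset.mem_filter.mpr ⟨hw, hτ⟩))) hτ
  · exact hvfalse u (Finset.mem_insert_self _ _) (hu v (Finset.mem_union_left M hvF)).symm

theorem dK_metric_and_far_realization_general {V : Type*}
    (G : SimpleGraph V) (hG : ExtensionProperty G)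
    (K : Set (G ≃g G)) (hK : @IsCompact _ (autTopology G) K) :
    (∀ x : V, (kGraph G K).edist x x = 0) ∧
    (∀ x y : V, (kGraph G K).edist x y = (kGraph G K).edist y x) ∧
    (∀ x y z : V,
      (kGraph G K).edist x z ≤ (kGraph G K).edist x y + (kGraph G K).edist y z) ∧
    (∀ M : Finset V, ∀ τ : V → Bool, ∀ r : ℕ,
      ∃ v : V, Realizes G M τ v ∧ ∀ w ∈ M, (r : ℕ∞) < (kGraph G K).edist v w) := by
  refine ⟨fun _ => edist_self, fun _ _ => edist_comm, fun _ _ _ => SimpleGraph.edist_triangle,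
    fun M τ r => ?_⟩
  have hball : (⋃ w ∈ M, (kGraph G K).ball w (r + 1 : ℕ)).Finite :=
    M.finite_toSet.biUnion fun w _ => finite_ball (kGraph_neighborSet_finite G K hK) w (r + 1)
  obtain ⟨v, hv, hvball⟩ := hG.exists_realizes_notMem M hball.toFinset τ
  refine ⟨v, hv, fun w hw => ?_⟩
  have hvw : v ∉ (kGraph G K).ball w (r + 1 : ℕ) := fun h =>
    hvball (hball.mem_toFinset.mpr (Set.mem_biUnion hw h))
  rw [mem_ball, not_lt, Nat.cast_add, Nat.cast_one] at hvw
  exact (ENat.add_one_le_iff (ENat.natCast_ne_top r)).mp hvw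

/-- `d_K` (the `E`-graph extended distance) is an extended metric, and every finite
adjacency pattern is realized by a vertex at `d_K`-distance `> r` from `M`. -/
theorem dK_metric_and_far_realization {V : Type*} [Countable V] [Infinite V]
    (G : SimpleGraph V) (hG : ExtensionProperty G)
    (K : Set (G ≃g G)) (hK : @IsCompact _ (autTopology G) K) :
    (∀ x : V, (kGraph G K).edist x x = 0) ∧
    (∀ x y : V, (kGraph G K).edist x y = (kGraph G K).edist y x) ∧
    (∀ x y z : V,
      (kGraph G K).edist x z ≤ (kGraph G K).edist x y + (kGraph G K).edist y z) ∧
    (∀ M : Finset V, ∀ τ : V → Bool, ∀ r : ℕ,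
      ∃ v : V, Realizes G M τ v ∧ ∀ w ∈ M, (r : ℕ∞) < (kGraph G K).edist v w) :=
  dK_metric_and_far_realization_general G hG K hK
end
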